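/- arXiv:math/0205055 — 6 statements merged into one kernel-verified Lean document; each statement's English description precedes it below -/
import Mathlib

section
/- The number of partitions of n into distinct parts congruent to 1 or 2 mod 3 equals the number of partitions of n into parts with minimal difference 3, where consecutive parts may differ by exactly 3 only if a part is congruent to 1 or 2 mod 3. -/
open Nat

section SchurAux
open Polynomial Finset


noncomputable def gp : ℕ → ℕ → Polynomial ℤ
  | _, 0 => 1
  | 0, _+1 => 0
  | (j+1), (r+1) => gp j (r+1) + X^(3*(j-r)) * gp j r

noncomputable def dd : ℕ → Polynomial ℤ
  | 0 => 1
  | 1 => 1 + X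
  | 2 => 1 + X + X^2
  | (m+3) => dd (m+2) + X^(m+3) * (if (m+3) % 3 = 0 then dd (m-1) else dd m)

noncomputable def dE : ℕ → Polynomial ℤ
  | 0 => 1
  | 1 => 1
  | (j+2) => dd (3*j+2)

noncomputable def PP : ℕ → Polynomial ℤ
  | 0 => (1+X)*(1+X^2)
  | (k+1) => PP k * ((1+X^(3*k+4))*(1+X^(3*k+5)))

lemma dd0 : dd 0 = 1 := by simp [dd]
lemma dd1 : dd 1 = 1 + X := by simp [dd]
lemma dd2 : dd 2 = 1 + X + X^2 := by simp [dd]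
lemma dd3 (m : ℕ) : dd (m+3) = dd (m+2) + X^(m+3) * (if (m+3) % 3 = 0 then dd (m-1) else dd m) := by
  rw [dd]

lemma dE0 : dE 0 = 1 := by simp [dE]
lemma dE1 : dE 1 = 1 := by simp [dE]
lemma dE2 (j : ℕ) : dE (j+2) = dd (3*j+2) := by simp [dE]

lemma gp_zero (j r : ℕ) (h : j < r) : gp j r = 0 := by
  induction j generalizing r with
  | zero => cases r with
    | zero => omega
    | succ r => simp [gp]
  | succ j ih =>
    cases r with
    | zero => omega
    | succ r =>
      rw [gp]
      rw [ih (r+1) (by omega), ih r (by omega)]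
      ring

lemma gp_zero' (j : ℕ) : gp j 0 = 1 := by cases j <;> simp [gp]

lemma gp_succ (j r : ℕ) : gp (j+1) (r+1) = gp j (r+1) + X^(3*(j-r)) * gp j r := by rw [gp]

/-- the key Gaussian identity -/
lemma gp_key (j r : ℕ) :
    gp j (r+1) * (1 - X^(3*(r+1))) = gp j r * (1 - X^(3*(j-r))) := by
  induction j generalizing r with
  | zero =>
    rw [gp_zero 0 (r+1) (by omega)]
    cases r with
    | zero => simp
    | succ r => rw [gp_zero 0 (r+1) (by omega)]; ring
  | succ j ih =>
    rcases le_or_gt (r+1) (j+1) with hle | hlt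
    · have hrj : r ≤ j := by omega
      rw [gp_succ]
      have e1 := ih r
      have lhs : (gp j (r+1) + X^(3*(j-r)) * gp j r) * (1 - X^(3*(r+1)))
          = gp j r * (1 - X^(3*(j+1))) := by
        have expand : (gp j (r+1) + X^(3*(j-r)) * gp j r) * (1 - X^(3*(r+1)))
            = gp j (r+1) * (1 - X^(3*(r+1))) + X^(3*(j-r)) * (gp j r * (1 - X^(3*(r+1)))) := by ring
        rw [expand, e1]
        have hexp : 3*(j-r) + 3*(r+1) = 3*(j+1) := by omega
        calc gp j r * (1 - X ^ (3 * (j - r))) + X ^ (3 * (j - r)) * (gp j r * (1 - X ^ (3 * (r + 1))))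
            = gp j r * (1 - X ^ (3*(j-r)) * X ^ (3*(r+1))) := by ring
          _ = gp j r * (1 - X^(3*(j+1))) := by rw [← pow_add, hexp]
      rw [lhs]
      cases r with
      | zero => rw [gp_zero', gp_zero']; simp
      | succ s =>
        rw [gp_succ]
        have e2 := ih s
        have hexp2 : 3*(j-s) + 3*(s+1) = 3*(j+1) := by omega
        have hx : (j+1) - (s+1) = j - s := by omega
        rw [hx]
        have key : (gp j (s+1) + X^(3*(j-s)) * gp j s) * (1 - X^(3*(j-s)))
            = gp j (s+1) * (1 - X^(3*(j+1))) := by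
          calc (gp j (s+1) + X^(3*(j-s)) * gp j s) * (1 - X^(3*(j-s)))
              = gp j (s+1) * (1 - X^(3*(j-s))) + X^(3*(j-s)) * (gp j s * (1 - X^(3*(j-s)))) := by ring
            _ = gp j (s+1) * (1 - X^(3*(j-s))) + X^(3*(j-s)) * (gp j (s+1) * (1 - X^(3*(s+1)))) := by
                rw [← e2]
            _ = gp j (s+1) * (1 - X^(3*(j-s)) * X^(3*(s+1))) := by ring
            _ = gp j (s+1) * (1 - X^(3*(j+1))) := by rw [← pow_add, hexp2]
        exact key.symm
    · rw [gp_zero (j+1) (r+1) (by omega)]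
      have h0 : (j+1) - r = 0 := by omega
      rw [h0]
      simp

lemma dd_rec (m : ℕ) : dd (m+1) = dd m + X^(m+1) * dd (m+1 - (if (m+1) % 3 = 0 then 4 else 3)) := by
  match m with
  | 0 => rw [dd1, if_neg (by omega), show (1:ℕ)-3 = 0 by omega, dd0]; ring
  | 1 => rw [dd2, dd1, if_neg (by omega), show (2:ℕ)-3 = 0 by omega, dd0]; ring
  | (m+2) =>
    rw [show m+2+1 = m+3 by omega, dd3]
    by_cases h : (m+3) % 3 = 0
    · rw [if_pos h, if_pos h, show m+3-4 = m-1 by omega]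
    · rw [if_neg h, if_neg h, show m+3-3 = m by omega]

lemma dE_eq (j : ℕ) : dE (j+1) = dd (3*j-1) := by
  cases j with
  | zero => rw [dE1, show 3*0-1 = 0 by omega, dd0]
  | succ j => rw [dE2, show 3*(j+1)-1 = 3*j+2 by omega]

/-- the ★ recurrence -/
lemma dstar (j : ℕ) :
    dE (j+2) = (1 + X^(3*j+1) + X^(3*j+2)) * dE (j+1) + (X^(3*j) - X^(6*j)) * dE j := by
  cases j with
  | zero =>
    rw [dE2, dd2, dE1, dE0]
    norm_num
  | succ j =>
    rw [show j+1+2 = j+3 by omega, show dE (j+3) = dd (3*(j+1)+2) by rw [show j+3 = (j+1)+2 by omega, dE2],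
        dE2, dE_eq j]
    have h1 : dd (3*j+5) = dd (3*j+4) + X^(3*j+5) * dd (3*j+2) := by
      have := dd_rec (3*j+4)
      rwa [if_neg (by omega), show 3*j+4+1-3 = 3*j+2 by omega] at this
    have h2 : dd (3*j+4) = dd (3*j+3) + X^(3*j+4) * dd (3*j+1) := by
      have := dd_rec (3*j+3)
      rwa [if_neg (by omega), show 3*j+3+1-3 = 3*j+1 by omega] at this
    have h3 : dd (3*j+3) = dd (3*j+2) + X^(3*j+3) * dd (3*j-1) := by
      have := dd_rec (3*j+2)
      rwa [if_pos (by omega), show 3*j+2+1-4 = 3*j-1 by omega] at this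
    have h4 : dd (3*j+1) = dd (3*j+2) - X^(3*j+2) * dd (3*j-1) := by
      have := dd_rec (3*j+1)
      rw [if_neg (by omega), show 3*j+1+1-3 = 3*j-1 by omega] at this
      rw [this]; ring
    rw [show 3*(j+1)+2 = 3*j+5 by omega, show 3*(j+1)+1 = 3*j+4 by omega,
        show 3*(j+1) = 3*j+3 by omega, show 6*(j+1) = 6*j+6 by omega]
    rw [h1, h2, h3, h4]
    have hexp : X^(3*j+4) * X^(3*j+2) = (X^(6*j+6) : Polynomial ℤ) := by rw [← pow_add]; congr 1; omega
    calc dd (3*j+2) + X^(3*j+3) * dd (3*j-1) + X^(3*j+4) * (dd (3*j+2) - X^(3*j+2) * dd (3*j-1)) + X^(3*j+5) * dd (3*j+2)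
        = (1 + X^(3*j+4) + X^(3*j+5)) * dd (3*j+2) + X^(3*j+3) * dd (3*j-1) - (X^(3*j+4) * X^(3*j+2)) * dd (3*j-1) := by ring
      _ = (1 + X^(3*j+4) + X^(3*j+5)) * dd (3*j+2) + (X^(3*j+3) - X^(6*j+6)) * dd (3*j-1) := by rw [hexp]; ring

noncomputable def SA (j : ℕ) : Polynomial ℤ :=
  ∑ r ∈ Finset.range (j+1), X^(3*r*j) * (gp j r * dE (j+1-r))

noncomputable def SB (k : ℕ) : Polynomial ℤ :=
  ∑ r ∈ Finset.range (k+1), X^(3*r*(k+1)) * (gp k r * dE (k+2-r))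


noncomputable def CCC (k r : ℕ) : Polynomial ℤ :=
  X^(3*r*k) * ((gp k r * (1 - X^(3*(k-r)))) * dE (k-r))



lemma stepP (k : ℕ) : SA (k+1) = SB k + X^(6*k+3) * SA k := by
  have expand : ∀ x ∈ Finset.range (k+1),
      X^(3*(x+1)*(k+1)) * (gp (k+1) (x+1) * dE (k+2-(x+1)))
      = X^(3*(x+1)*(k+1)) * (gp k (x+1) * dE (k+2-(x+1)))
        + X^(6*k+3) * (X^(3*x*k) * (gp k x * dE (k+1-x))) := by
    intro x hx
    rw [Finset.mem_range] at hx
    have hxk : x ≤ k := by omega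
    rw [gp_succ]
    have h1 : k+2-(x+1) = k+1-x := by omega
    rw [h1]
    have hexp : X^(3*(x+1)*(k+1)) * X^(3*(k-x)) = (X^(6*k+3) * X^(3*x*k) : Polynomial ℤ) := by
      rw [← pow_add, ← pow_add]
      congr 1
      obtain ⟨c, rfl⟩ : ∃ c, k = x + c := ⟨k - x, by omega⟩
      have : x + c - x = c := by omega
      rw [this]; ring
    calc X^(3*(x+1)*(k+1)) * ((gp k (x+1) + X^(3*(k-x)) * gp k x) * dE (k+1-x))
        = X^(3*(x+1)*(k+1)) * (gp k (x+1) * dE (k+1-x))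
          + (X^(3*(x+1)*(k+1)) * X^(3*(k-x))) * (gp k x * dE (k+1-x)) := by ring
      _ = X^(3*(x+1)*(k+1)) * (gp k (x+1) * dE (k+1-x))
          + X^(6*k+3) * (X^(3*x*k) * (gp k x * dE (k+1-x))) := by rw [hexp]; ring
  unfold SA SB
  rw [Finset.sum_range_succ' (fun r => X^(3*r*(k+1)) * (gp (k+1) r * dE (k+1+1-r))) (k+1)]
  rw [Finset.sum_congr rfl expand, Finset.sum_add_distrib, ← Finset.mul_sum]
  -- now : Σ_{x∈range(k+1)} X^{3(x+1)(k+1)} gp k (x+1) dE(k+1-x)  + X^{6k+3} SA' + f 0  = SB + X^{6k+3} SA'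
  have f0 : X^(3*0*(k+1)) * (gp (k+1) 0 * dE (k+1+1-0)) = X^(3*0*(k+1)) * (gp k 0 * dE (k+2-0)) := by
    rw [gp_zero', gp_zero']
  rw [f0]
  have peel : ∑ x ∈ Finset.range (k+1), X^(3*(x+1)*(k+1)) * (gp k (x+1) * dE (k+2-(x+1)))
      = ∑ x ∈ Finset.range k, X^(3*(x+1)*(k+1)) * (gp k (x+1) * dE (k+2-(x+1))) := by
    rw [Finset.sum_range_succ]
    rw [gp_zero k (k+1) (by omega)]
    simp
  have hsplit : ∀ x, k+2-(x+1) = k+1-x := fun x => by omega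
  calc (∑ x ∈ Finset.range (k+1), X ^ (3 * (x + 1) * (k + 1)) * (gp k (x + 1) * dE (k + 2 - (x + 1))))
        + X ^ (6 * k + 3) * ∑ i ∈ Finset.range (k + 1), X ^ (3 * i * k) * (gp k i * dE (k + 1 - i))
        + X ^ (3 * 0 * (k + 1)) * (gp k 0 * dE (k + 2 - 0))
      = ((∑ x ∈ Finset.range k, X ^ (3 * (x + 1) * (k + 1)) * (gp k (x + 1) * dE (k + 2 - (x + 1))))
        + X ^ (3 * 0 * (k + 1)) * (gp k 0 * dE (k + 2 - 0)))
        + X ^ (6 * k + 3) * ∑ i ∈ Finset.range (k + 1), X ^ (3 * i * k) * (gp k i * dE (k + 1 - i)) := by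
        rw [peel]; ring
    _ = (∑ r ∈ Finset.range (k+1), X^(3*r*(k+1)) * (gp k r * dE (k+2-r)))
        + X ^ (6 * k + 3) * ∑ i ∈ Finset.range (k + 1), X ^ (3 * i * k) * (gp k i * dE (k + 1 - i)) := by
        rw [Finset.sum_range_succ' (fun r => X^(3*r*(k+1)) * (gp k r * dE (k+2-r))) k]

lemma stepB (k : ℕ) : SB k = (1 + X^(3*k+1) + X^(3*k+2)) * SA k := by
  have expand : ∀ r ∈ Finset.range (k+1),
      X^(3*r*(k+1)) * (gp k r * dE (k+2-r))
      = (X^(3*r*(k+1)) * (gp k r * dE (k+1-r))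
          + (X^(3*k+1)+X^(3*k+2)) * (X^(3*r*k) * (gp k r * dE (k+1-r))))
        + X^(3*k) * CCC k r := by
    intro r hr
    rw [Finset.mem_range] at hr
    obtain ⟨c, rfl⟩ : ∃ c, k = r + c := ⟨k - r, by omega⟩
    have h1 : r + c + 2 - r = c + 2 := by omega
    have h2 : r + c + 1 - r = c + 1 := by omega
    have h3 : r + c - r = c := by omega
    unfold CCC
    rw [h1, h2, h3, dstar c]
    ring
  unfold SB
  rw [Finset.sum_congr rfl expand, Finset.sum_add_distrib, Finset.sum_add_distrib,
      ← Finset.mul_sum, ← Finset.mul_sum]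
  -- goal: ΣA + (X^{3k+1}+X^{3k+2}) SA' + X^{3k} ΣC = (1+X^{3k+1}+X^{3k+2}) SA'
  have key : (∑ r ∈ Finset.range (k+1), X^(3*r*(k+1)) * (gp k r * dE (k+1-r)))
      + X^(3*k) * (∑ r ∈ Finset.range (k+1), CCC k r) = SA k := by
    have saeq : ∀ r ∈ Finset.range (k+1),
        X^(3*r*k) * (gp k r * dE (k+1-r))
        = X^(3*r*(k+1)) * (gp k r * dE (k+1-r))
          + X^(3*r*k) * ((gp k r * (1 - X^(3*r))) * dE (k+1-r)) := by
      intro r hr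
      rw [Finset.mem_range] at hr
      have : 3*r*(k+1) = 3*r*k + 3*r := by ring
      rw [this, pow_add]
      ring
    unfold SA
    rw [Finset.sum_congr rfl saeq, Finset.sum_add_distrib]
    congr 1
    -- Σ_r X^{3rk} ((gp k r (1-X^{3r})) dE (k+1-r)) = X^{3k} Σ CC
    rw [Finset.sum_range_succ' (fun r => X^(3*r*k) * ((gp k r * (1 - X^(3*r))) * dE (k+1-r))) k]
    have d0 : X^(3*0*k) * ((gp k 0 * (1 - X^(3*0))) * dE (k+1-0)) = 0 := by
      norm_num
    rw [d0, add_zero]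
    have dstep : ∀ s ∈ Finset.range k,
        X^(3*(s+1)*k) * ((gp k (s+1) * (1 - X^(3*(s+1)))) * dE (k+1-(s+1)))
        = X^(3*k) * CCC k s := by
      intro s hs
      rw [Finset.mem_range] at hs
      rw [gp_key k s]
      unfold CCC
      have h2 : k+1-(s+1) = k - s := by omega
      rw [h2]
      have : 3*(s+1)*k = 3*k + 3*s*k := by ring
      rw [this, pow_add]
      ring
    rw [Finset.sum_congr rfl dstep, ← Finset.mul_sum]
    congr 1
    rw [Finset.sum_range_succ]
    have ck : CCC k k = 0 := by
      unfold CCC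
      have : k - k = 0 := by omega
      rw [this]
      norm_num
    rw [ck, add_zero]
  calc (∑ r ∈ Finset.range (k+1), X^(3*r*(k+1)) * (gp k r * dE (k+1-r)))
        + (X^(3*k+1)+X^(3*k+2)) * (∑ r ∈ Finset.range (k+1), X^(3*r*k) * (gp k r * dE (k+1-r)))
        + X^(3*k) * (∑ r ∈ Finset.range (k+1), CCC k r)
      = ((∑ r ∈ Finset.range (k+1), X^(3*r*(k+1)) * (gp k r * dE (k+1-r)))
        + X^(3*k) * (∑ r ∈ Finset.range (k+1), CCC k r))
        + (X^(3*k+1)+X^(3*k+2)) * SA k := by unfold SA; ring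
    _ = SA k + (X^(3*k+1)+X^(3*k+2)) * SA k := by rw [key]
    _ = (1 + X^(3*k+1) + X^(3*k+2)) * SA k := by ring

lemma master (k : ℕ) : PP k = SA (k+1) := by
  induction k with
  | zero =>
    show (1+X)*(1+X^2) = _
    unfold SA
    rw [show (1:ℕ)+1 = 2 by rfl, Finset.sum_range_succ, Finset.sum_range_one]
    rw [gp_zero' 1, show gp 1 1 = gp 0 1 + X^(3*(0-0)) * gp 0 0 from gp_succ 0 0]
    rw [show gp 0 1 = 0 from gp_zero 0 1 (by omega), gp_zero' 0]
    rw [show (1:ℕ)+1-0 = 2 by rfl, show (1:ℕ)+1-1 = 1 by rfl, dE2, dE1, dd2]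
    norm_num
    ring
  | succ k ih =>
    have h1 : SA (k+2) = SB (k+1) + X^(6*(k+1)+3) * SA (k+1) := stepP (k+1)
    have h2 : SB (k+1) = (1 + X^(3*(k+1)+1) + X^(3*(k+1)+2)) * SA (k+1) := stepB (k+1)
    show PP k * ((1+X^(3*k+4))*(1+X^(3*k+5))) = SA (k+2)
    rw [h1, h2, ih]
    have e1 : 3*(k+1)+1 = 3*k+4 := by omega
    have e2 : 3*(k+1)+2 = 3*k+5 := by omega
    have e3 : 6*(k+1)+3 = 6*k+9 := by omega
    rw [e1, e2, e3]
    have e4 : (X:Polynomial ℤ)^(6*k+9) = X^(3*k+4) * X^(3*k+5) := by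
      rw [← pow_add]; congr 1; omega
    rw [e4]
    ring

def bnd (m : ℕ) (s : Multiset ℕ) : Prop := ∀ x ∈ s, x ≤ m
def SchurB (s : Multiset ℕ) : Prop :=
  s.Nodup ∧ ∀ x ∈ s, ∀ y ∈ s, x < y → 3 ≤ y - x ∧ (y - x = 3 → y % 3 = 1 ∨ y % 3 = 2)
def SchurA (s : Multiset ℕ) : Prop := s.Nodup ∧ ∀ x ∈ s, x % 3 = 1 ∨ x % 3 = 2

instance (m : ℕ) : DecidablePred (bnd m) := fun s => by unfold bnd; infer_instance
instance : DecidablePred SchurB := fun s => by unfold SchurB; infer_instance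
instance : DecidablePred SchurA := fun s => by unfold SchurA; infer_instance

def bcount (m n : ℕ) : ℕ := Fintype.card {p : n.Partition // SchurB p.parts ∧ bnd m p.parts}
def acount (m n : ℕ) : ℕ := Fintype.card {p : n.Partition // SchurA p.parts ∧ bnd m p.parts}

lemma card_split {α : Type*} [Fintype α] (P Q : α → Prop) [DecidablePred P] [DecidablePred Q] :
    Fintype.card {x : α // P x}
      = Fintype.card {x : α // P x ∧ Q x} + Fintype.card {x : α // P x ∧ ¬ Q x} := by
  rw [← Fintype.card_sum]
  apply Fintype.card_congr
  exact
    { toFun := fun x => if h : Q x.1 then Sum.inl ⟨x.1, x.2, h⟩ else Sum.inr ⟨x.1, x.2, h⟩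
      invFun := fun x => Sum.elim (fun y => ⟨y.1, y.2.1⟩) (fun y => ⟨y.1, y.2.1⟩) x
      left_inv := fun x => by by_cases h : Q x.1 <;> simp [h]
      right_inv := fun x => by
        rcases x with y | y
        · simp [y.2.2]
        · simp [y.2.2] }

lemma part_le_sum {n : ℕ} (p : n.Partition) {x : ℕ} (hx : x ∈ p.parts) : x ≤ n := by
  have h := Multiset.cons_erase hx
  have : p.parts.sum = x + (p.parts.erase x).sum := by rw [← Multiset.sum_cons, h]
  rw [p.parts_sum] at this
  omega

lemma SchurB_mono {s t : Multiset ℕ} (h : s ≤ t) (ht : SchurB t) : SchurB s := by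
  refine ⟨Multiset.nodup_of_le h ht.1, fun x hx y hy hxy => ?_⟩
  exact ht.2 x (Multiset.mem_of_le h hx) y (Multiset.mem_of_le h hy) hxy

/-- remove the largest part (B-side) -/
def eqB (n m : ℕ) (h1 : 1 ≤ m) (h2 : m ≤ n) :
    {p : n.Partition // (SchurB p.parts ∧ bnd m p.parts) ∧ m ∈ p.parts}
    ≃ {q : (n-m).Partition // SchurB q.parts ∧ bnd (m - (if m % 3 = 0 then 4 else 3)) q.parts} where
  toFun p := by
    refine ⟨⟨p.1.parts.erase m, ?_, ?_⟩, ?_, ?_⟩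
    · intro i hi
      exact p.1.parts_pos (Multiset.mem_of_mem_erase hi)
    · have h := Multiset.cons_erase p.2.2
      have : p.1.parts.sum = m + (p.1.parts.erase m).sum := by rw [← Multiset.sum_cons, h]
      rw [p.1.parts_sum] at this
      omega
    · exact SchurB_mono (Multiset.erase_le m p.1.parts) p.2.1.1
    · intro x hx
      have hxp : x ∈ p.1.parts := Multiset.mem_of_mem_erase hx
      have hxm : x ≠ m := by
        intro h
        subst h
        exact p.2.1.1.1.notMem_erase hx
      have hxle : x ≤ m := p.2.1.2 x hxp
      have hlt : x < m := lt_of_le_of_ne hxle hxm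
      have hcond := p.2.1.1.2 x hxp m p.2.2 hlt
      by_cases h3 : m % 3 = 0
      · rw [if_pos h3]
        have : ¬ (m - x = 3) := by
          intro hc
          rcases hcond.2 hc with h | h <;> omega
        omega
      · rw [if_neg h3]
        omega
  invFun q := by
    refine ⟨⟨m ::ₘ q.1.parts, ?_, ?_⟩, ⟨⟨?_, ?_⟩, ?_⟩, ?_⟩
    · intro i hi
      rcases Multiset.mem_cons.1 hi with h | h
      · omega
      · exact q.1.parts_pos h
    · rw [Multiset.sum_cons, q.1.parts_sum]
      omega
    · rw [Multiset.nodup_cons]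
      refine ⟨fun hm => ?_, q.2.1.1⟩
      have := q.2.2 m hm
      split_ifs at this <;> omega
    · intro x hx y hy hxy
      rcases Multiset.mem_cons.1 hx with hx1 | hx1 <;> rcases Multiset.mem_cons.1 hy with hy1 | hy1
      · omega
      · -- x = m, y in q : y ≤ m - 3 < m = x, contradiction with x < y
        exfalso
        have hyb := q.2.2 y hy1
        have hy1' := q.1.parts_pos hy1
        split_ifs at hyb <;> omega
      · -- x in q, y = m
        have hxb := q.2.2 x hx1
        have hx1' := q.1.parts_pos hx1
        by_cases hm3 : m % 3 = 0
        · rw [if_pos hm3] at hxb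
          exact ⟨by omega, fun h3 => by omega⟩
        · rw [if_neg hm3] at hxb
          exact ⟨by omega, fun h3 => by omega⟩
      · exact q.2.1.2 x hx1 y hy1 hxy
    · intro x hx
      rcases Multiset.mem_cons.1 hx with h | h
      · omega
      · have := q.2.2 x h
        split_ifs at this <;> omega
    · exact Multiset.mem_cons_self m _
  left_inv p := by
    apply Subtype.ext
    apply Nat.Partition.ext
    simpa using Multiset.cons_erase p.2.2
  right_inv q := by
    apply Subtype.ext
    apply Nat.Partition.ext
    simpa using Multiset.erase_cons_head m q.1.parts

lemma bcount_rec (m n : ℕ) (hm : 1 ≤ m) :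
    bcount m n = bcount (m-1) n
      + (if m ≤ n then bcount (m - (if m % 3 = 0 then 4 else 3)) (n - m) else 0) := by
  unfold bcount
  rw [card_split (fun p : n.Partition => SchurB p.parts ∧ bnd m p.parts) (fun p => m ∈ p.parts)]
  rw [add_comm]
  congr 1
  · -- m ∉ parts  ↔  bnd (m-1)
    apply Fintype.card_congr
    apply Equiv.subtypeEquivRight
    intro p
    constructor
    · rintro ⟨⟨hs, hb⟩, hnm⟩
      refine ⟨hs, fun x hx => ?_⟩
      have : x ≠ m := fun h => hnm (h ▸ hx)
      have := hb x hx
      omega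
    · rintro ⟨hs, hb⟩
      refine ⟨⟨hs, fun x hx => ?_⟩, fun hmem => ?_⟩
      · have := hb x hx; omega
      · have := hb m hmem; omega
  · by_cases h : m ≤ n
    · rw [if_pos h]
      exact Fintype.card_congr (eqB n m hm h)
    · rw [if_neg h]
      rw [Fintype.card_eq_zero_iff]
      constructor
      intro p
      exact h (le_trans (part_le_sum p.1 p.2.2) le_rfl)


/-- remove the largest part (A-side) -/
def eqA (n m : ℕ) (h1 : 1 ≤ m) (h2 : m ≤ n) (h3 : ¬ m % 3 = 0) :
    {p : n.Partition // (SchurA p.parts ∧ bnd m p.parts) ∧ m ∈ p.parts}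
    ≃ {q : (n-m).Partition // SchurA q.parts ∧ bnd (m - 1) q.parts} where
  toFun p := by
    refine ⟨⟨p.1.parts.erase m, ?_, ?_⟩, ⟨?_, ?_⟩, ?_⟩
    · intro i hi
      exact p.1.parts_pos (Multiset.mem_of_mem_erase hi)
    · have h := Multiset.cons_erase p.2.2
      have : p.1.parts.sum = m + (p.1.parts.erase m).sum := by rw [← Multiset.sum_cons, h]
      rw [p.1.parts_sum] at this
      omega
    · exact Multiset.nodup_of_le (Multiset.erase_le m _) p.2.1.1.1
    · intro x hx
      exact p.2.1.1.2 x (Multiset.mem_of_mem_erase hx)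
    · intro x hx
      have hxp : x ∈ p.1.parts := Multiset.mem_of_mem_erase hx
      have hxm : x ≠ m := by
        intro h
        subst h
        exact p.2.1.1.1.notMem_erase hx
      have := p.2.1.2 x hxp
      omega
  invFun q := by
    refine ⟨⟨m ::ₘ q.1.parts, ?_, ?_⟩, ⟨⟨?_, ?_⟩, ?_⟩, ?_⟩
    · intro i hi
      rcases Multiset.mem_cons.1 hi with h | h
      · omega
      · exact q.1.parts_pos h
    · rw [Multiset.sum_cons, q.1.parts_sum]
      omega
    · rw [Multiset.nodup_cons]
      refine ⟨fun hm => ?_, q.2.1.1⟩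
      have := q.2.2 m hm
      omega
    · intro x hx
      rcases Multiset.mem_cons.1 hx with h | h
      · omega
      · exact q.2.1.2 x h
    · intro x hx
      rcases Multiset.mem_cons.1 hx with h | h
      · omega
      · have := q.2.2 x h; omega
    · exact Multiset.mem_cons_self m _
  left_inv p := by
    apply Subtype.ext
    apply Nat.Partition.ext
    simpa using Multiset.cons_erase p.2.2
  right_inv q := by
    apply Subtype.ext
    apply Nat.Partition.ext
    simpa using Multiset.erase_cons_head m q.1.parts

lemma acount_bnd_drop (m n : ℕ) (hm : 1 ≤ m)
    (hno : ∀ (p : n.Partition), (SchurA p.parts ∧ bnd m p.parts) → m ∉ p.parts → True) :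
    True := trivial

lemma acount_rec0 (m n : ℕ) (hm : 1 ≤ m) (h3 : m % 3 = 0) :
    acount m n = acount (m-1) n := by
  unfold acount
  apply Fintype.card_congr
  apply Equiv.subtypeEquivRight
  intro p
  constructor
  · rintro ⟨hs, hb⟩
    refine ⟨hs, fun x hx => ?_⟩
    have hr := hs.2 x hx
    have := hb x hx
    omega
  · rintro ⟨hs, hb⟩
    exact ⟨hs, fun x hx => by have := hb x hx; omega⟩

lemma acount_rec (m n : ℕ) (hm : 1 ≤ m) (h3 : ¬ m % 3 = 0) :
    acount m n = acount (m-1) n + (if m ≤ n then acount (m-1) (n - m) else 0) := by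
  unfold acount
  rw [card_split (fun p : n.Partition => SchurA p.parts ∧ bnd m p.parts) (fun p => m ∈ p.parts)]
  rw [add_comm]
  congr 1
  · apply Fintype.card_congr
    apply Equiv.subtypeEquivRight
    intro p
    constructor
    · rintro ⟨⟨hs, hb⟩, hnm⟩
      refine ⟨hs, fun x hx => ?_⟩
      have : x ≠ m := fun h => hnm (h ▸ hx)
      have := hb x hx
      omega
    · rintro ⟨hs, hb⟩
      refine ⟨⟨hs, fun x hx => ?_⟩, fun hmem => ?_⟩
      · have := hb x hx; omega
      · have := hb m hmem; omega
  · by_cases h : m ≤ n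
    · rw [if_pos h]
      exact Fintype.card_congr (eqA n m hm h h3)
    · rw [if_neg h]
      rw [Fintype.card_eq_zero_iff]
      exact ⟨fun p => h (part_le_sum p.1 p.2.2)⟩


lemma count_zero_of_pred {P : Multiset ℕ → Prop} [DecidablePred P]
    (hP : P 0) (n : ℕ) :
    Fintype.card {p : n.Partition // P p.parts ∧ bnd 0 p.parts}
      = if n = 0 then 1 else 0 := by
  split_ifs with h
  · subst h
    rw [Fintype.card_eq_one_iff]
    refine ⟨⟨default, ?_⟩, ?_⟩
    · have : (default : Nat.Partition 0).parts = 0 := Nat.Partition.partition_zero_parts _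
      rw [this]
      exact ⟨hP, fun x hx => by simp at hx⟩
    · intro y
      apply Subtype.ext
      apply Subsingleton.elim
  · rw [Fintype.card_eq_zero_iff]
    constructor
    rintro ⟨p, hp, hb⟩
    rcases Multiset.empty_or_exists_mem p.parts with he | ⟨x, hx⟩
    · exact h (by rw [← p.parts_sum, he]; rfl)
    · have := p.parts_pos hx
      have := hb x hx
      omega

lemma bcount_zero (n : ℕ) : bcount 0 n = if n = 0 then 1 else 0 :=
  count_zero_of_pred ⟨Multiset.nodup_zero, fun x hx => absurd hx (Multiset.notMem_zero x)⟩ n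

lemma acount_zero (n : ℕ) : acount 0 n = if n = 0 then 1 else 0 :=
  count_zero_of_pred ⟨Multiset.nodup_zero, fun x hx => absurd hx (Multiset.notMem_zero x)⟩ n

lemma count_stab {P : Multiset ℕ → Prop} [DecidablePred P] (m m' n : ℕ) (h : n ≤ m) (h' : n ≤ m') :
    Fintype.card {p : n.Partition // P p.parts ∧ bnd m p.parts}
      = Fintype.card {p : n.Partition // P p.parts ∧ bnd m' p.parts} := by
  apply Fintype.card_congr
  apply Equiv.subtypeEquivRight
  intro p
  have hb : ∀ x ∈ p.parts, x ≤ n := fun x hx => part_le_sum p hx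
  constructor
  · rintro ⟨hp, _⟩
    exact ⟨hp, fun x hx => le_trans (hb x hx) h'⟩
  · rintro ⟨hp, _⟩
    exact ⟨hp, fun x hx => le_trans (hb x hx) h⟩

lemma bcount_stab (m n : ℕ) (h : n ≤ m) : bcount m n = bcount n n := count_stab m n n h le_rfl
lemma acount_stab (m n : ℕ) (h : n ≤ m) : acount m n = acount n n := count_stab m n n h le_rfl

noncomputable def QQ : ℕ → Polynomial ℤ
  | 0 => 1
  | (m+1) => QQ m * (if (m+1)%3 = 0 then 1 else 1+X^(m+1))



lemma coeff_dd (m n : ℕ) : (dd m).coeff n = (bcount m n : ℤ) := by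
  induction m using Nat.strong_induction_on generalizing n with
  | _ m ih =>
    match m with
    | 0 =>
      rw [dd0, Polynomial.coeff_one, bcount_zero]
      split_ifs with h1 h2 h2 <;> simp_all
    | (m+1) =>
      rw [dd_rec m, Polynomial.coeff_add, Polynomial.X_pow_mul, Polynomial.coeff_mul_X_pow',
          bcount_rec (m+1) n (by omega)]
      have hmain := ih m (by omega) n
      by_cases h : m+1 ≤ n
      · rw [if_pos h, if_pos h]
        push_cast
        rw [hmain, ih (m+1 - (if (m+1)%3 = 0 then 4 else 3)) (by split_ifs <;> omega) (n-(m+1))]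
      · rw [if_neg h, if_neg h]
        push_cast
        rw [hmain]

lemma qq_succ (m : ℕ) : QQ (m+1) = QQ m * (if (m+1)%3 = 0 then 1 else 1+X^(m+1)) := by rw [QQ]

lemma coeff_QQ (m n : ℕ) : (QQ m).coeff n = (acount m n : ℤ) := by
  induction m generalizing n with
  | zero =>
    show (1 : Polynomial ℤ).coeff n = _
    rw [Polynomial.coeff_one, acount_zero]
    split_ifs with h1 h2 h2 <;> simp_all
  | succ m ih =>
    rw [qq_succ]
    by_cases h3 : (m+1) % 3 = 0
    · rw [if_pos h3, mul_one, ih, acount_rec0 (m+1) n (by omega) h3]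
      simp
    · rw [if_neg h3, mul_add, mul_one, Polynomial.coeff_add, Polynomial.coeff_mul_X_pow',
          acount_rec (m+1) n (by omega) h3]
      push_cast
      congr 1
      · exact ih n
      · split_ifs with h
        · exact ih _
        · rfl

lemma QQ_PP (k : ℕ) : QQ (3*k+3) = PP k := by
  induction k with
  | zero =>
    show QQ 3 = (1+X)*(1+X^2)
    rw [show (3:ℕ) = 2+1 by rfl, qq_succ, if_pos (by omega),
        show (2:ℕ) = 1+1 by rfl, qq_succ, if_neg (by omega),
        show (1:ℕ) = 0+1 by rfl, qq_succ, if_neg (by omega)]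
    show (1:Polynomial ℤ) * (1+X^1) * (1+X^(1+1)) * 1 = (1+X)*(1+X^2)
    norm_num
  | succ k ih =>
    have e1 : 3*(k+1)+3 = (3*k+5)+1 := by omega
    have e2 : 3*k+5 = (3*k+4)+1 := by omega
    have e3 : 3*k+4 = (3*k+3)+1 := by omega
    rw [e1, qq_succ, if_pos (by omega), mul_one, e2, qq_succ, if_neg (by omega),
        e3, qq_succ, if_neg (by omega), ih]
    show PP k * (1 + X^(3*k+4)) * (1+X^(3*k+5)) = PP k * ((1+X^(3*k+4))*(1+X^(3*k+5)))
    ring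

lemma coeff_SA (n : ℕ) : (SA (n+1)).coeff n = (dE (n+2)).coeff n := by
  unfold SA
  rw [Polynomial.finset_sum_coeff, Finset.sum_range_succ']
  have hzero : ∀ x ∈ Finset.range (n+1),
      (X^(3*(x+1)*(n+1)) * (gp (n+1) (x+1) * dE (n+1+1-(x+1)))).coeff n = 0 := by
    intro x hx
    rw [Polynomial.X_pow_mul, Polynomial.coeff_mul_X_pow', if_neg]
    intro hle
    have h1 : 3*(n+1) ≤ 3*(x+1)*(n+1) := by
      have : 1 ≤ x+1 := by omega
      calc 3*(n+1) = 3*1*(n+1) := by ring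
        _ ≤ 3*(x+1)*(n+1) := by
            apply Nat.mul_le_mul_right
            omega
    omega
  rw [Finset.sum_congr rfl hzero]
  simp [gp_zero']

end SchurAux

/-- Schur's 1926 partition theorem: the number of partitions of `n` into
distinct parts `≡ 1, 2 (mod 3)` equals the number of partitions of `n` whose
parts pairwise differ by at least `3`, where a difference of exactly `3`
occurs only if the larger of the two parts is `≡ 1` or `2 (mod 3)`. -/
theorem schur_partition_theorem (n : ℕ) :
    Fintype.card {p : n.Partition //
        p.parts.Nodup ∧ ∀ x ∈ p.parts, x % 3 = 1 ∨ x % 3 = 2}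
    = Fintype.card {p : n.Partition //
        p.parts.Nodup ∧ ∀ x ∈ p.parts, ∀ y ∈ p.parts, x < y →
          3 ≤ y - x ∧ (y - x = 3 → y % 3 = 1 ∨ y % 3 = 2)} := by
  have hA : Fintype.card {p : n.Partition //
      p.parts.Nodup ∧ ∀ x ∈ p.parts, x % 3 = 1 ∨ x % 3 = 2} = acount n n := by
    apply Fintype.card_congr
    apply Equiv.subtypeEquivRight
    intro p
    constructor
    · intro h
      exact ⟨h, fun x hx => part_le_sum p hx⟩
    · rintro ⟨h, -⟩
      exact h
  have hB : Fintype.card {p : n.Partition //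
      p.parts.Nodup ∧ ∀ x ∈ p.parts, ∀ y ∈ p.parts, x < y →
        3 ≤ y - x ∧ (y - x = 3 → y % 3 = 1 ∨ y % 3 = 2)} = bcount n n := by
    apply Fintype.card_congr
    apply Equiv.subtypeEquivRight
    intro p
    constructor
    · intro h
      exact ⟨h, fun x hx => part_le_sum p hx⟩
    · rintro ⟨h, -⟩
      exact h
  rw [hA, hB]
  have key : (acount (3*n+3) n : ℤ) = (bcount (3*n+2) n : ℤ) := by
    rw [← coeff_QQ, ← coeff_dd, QQ_PP, master, coeff_SA, dE2]
  have h1 : acount (3*n+3) n = acount n n := acount_stab _ _ (by omega)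
  have h2 : bcount (3*n+2) n = bcount n n := bcount_stab _ _ (by omega)
  rw [h1, h2] at key
  exact_mod_cast key
end

section
/- Jacobi's triple product identity: ∑_{t=-∞}^{∞} q^{t(t+1)/2} z^{-t} = ∏_{n≥1}(1 - q^n)(1 + z q^{n-1})(1 + q^n/z), valid for |q| < 1 and z ≠ 0. -/
/-!
Expanding the first `N` factors of the product gives the finite identity
`∏_{j<N} (1 + z q^j) (1 + q^{j+1}/z) = ∑_t [2N, N+t]_q q^{t(t+1)/2} z^{-t}`,
proved by induction on `N`: multiplying by `(1 + z q^N)(1 + q^{N+1}/z)` produces the three-term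
recursion that the two `q`-Pascal rules give for the Gaussian binomials `[2N, N+t]_q`.
As `N → ∞`, `[2N, N+t]_q → 1 / (q;q)_∞` and these coefficients stay uniformly bounded, since
`(q;q)_m` converges to a nonzero limit; so Tannery's theorem passes to the limit, the dominating
series `∑ |q|^{t(t+1)/2} |z|^{-t}` converging by the ratio test. The recursion manipulates integer
powers of `q`, so `q = 0` is treated separately: there both sides are `1 + z`.
-/

open Finset Filter Topology Function

namespace JacobiTripleProduct

lemma triangular_add_one (t : ℤ) : (t + 1) * (t + 1 + 1) / 2 = t * (t + 1) / 2 + (t + 1) := by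
  rw [show (t + 1) * (t + 1 + 1) = t * (t + 1) + (t + 1) * 2 by ring,
    Int.add_mul_ediv_right _ _ two_ne_zero]

lemma triangular_sub_one (t : ℤ) : (t - 1) * (t - 1 + 1) / 2 = t * (t + 1) / 2 - t := by
  rw [show (t - 1) * (t - 1 + 1) = t * (t + 1) + -t * 2 by ring,
    Int.add_mul_ediv_right _ _ two_ne_zero, sub_eq_add_neg]

lemma triangular_neg (t : ℤ) : -t * (-t + 1) / 2 = t * (t + 1) / 2 - t := by
  rw [← triangular_sub_one]
  ring_nf

lemma triangular_ne_zero {t : ℤ} (h₀ : t ≠ 0) (h₁ : t ≠ -1) : t * (t + 1) / 2 ≠ 0 := by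
  have : 2 ≤ t * (t + 1) := by
    rcases lt_or_gt_of_ne h₀ with h | h
    · nlinarith [show t ≤ -2 by omega]
    · nlinarith
  omega

section QBinomial

variable {K : Type*} [Field K]

def qPochhammer (q : K) (m : ℕ) : K := ∏ j ∈ range m, (1 - q ^ (j + 1))

def qBinomial (q : K) (m : ℕ) (k : ℤ) : K :=
  if 0 ≤ k ∧ k ≤ m then
    qPochhammer q m / (qPochhammer q k.toNat * qPochhammer q (m - k).toNat)
  else 0

variable {q : K}

lemma qPochhammer_zero : qPochhammer q 0 = 1 :=
  prod_range_zero _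

lemma qPochhammer_succ (m : ℕ) :
    qPochhammer q (m + 1) = qPochhammer q m * (1 - q ^ (m + 1)) :=
  prod_range_succ _ _

lemma qPochhammer_ne_zero (hq : ∀ n : ℕ, q ^ (n + 1) ≠ 1) (m : ℕ) : qPochhammer q m ≠ 0 :=
  prod_ne_zero_iff.2 fun j _ => sub_ne_zero.2 (hq j).symm

lemma qBinomial_eq_zero {m : ℕ} {k : ℤ} (h : k < 0 ∨ (m : ℤ) < k) : qBinomial q m k = 0 := by
  rw [qBinomial, if_neg]
  omega

lemma qBinomial_natCast_add (a b : ℕ) :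
    qBinomial q (a + b) a = qPochhammer q (a + b) / (qPochhammer q a * qPochhammer q b) := by
  rw [qBinomial, if_pos (by omega)]
  congr 3
  omega

lemma qBinomial_symm (m : ℕ) (k : ℤ) : qBinomial q m (m - k) = qBinomial q m k := by
  simp only [qBinomial, sub_sub_cancel, mul_comm (qPochhammer q (m - k).toNat)]
  congr 1
  exact propext (by omega)

lemma qBinomial_zero (hq : ∀ n : ℕ, q ^ (n + 1) ≠ 1) (m : ℕ) : qBinomial q m 0 = 1 := by
  have h := qBinomial_natCast_add (q := q) 0 m
  rw [zero_add, Nat.cast_zero] at h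
  rw [h, qPochhammer_zero, one_mul, div_self (qPochhammer_ne_zero hq m)]

lemma qBinomial_self (hq : ∀ n : ℕ, q ^ (n + 1) ≠ 1) (m : ℕ) : qBinomial q m m = 1 := by
  simpa using (qBinomial_symm m 0).trans (qBinomial_zero hq m)

lemma qPochhammer_pascal (hq : ∀ n : ℕ, q ^ (n + 1) ≠ 1) (a b : ℕ) :
    qPochhammer q (a + 1 + (b + 1)) / (qPochhammer q (a + 1) * qPochhammer q (b + 1)) =
      qPochhammer q (a + (b + 1)) / (qPochhammer q (a + 1) * qPochhammer q b) +
        q ^ (b + 1) *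
          (qPochhammer q (a + (b + 1)) / (qPochhammer q a * qPochhammer q (b + 1))) := by
  rw [show a + 1 + (b + 1) = a + b + 1 + 1 by ring, show a + (b + 1) = a + b + 1 by ring]
  simp only [qPochhammer_succ]
  have := qPochhammer_ne_zero hq
  have := hq a
  have := hq b
  field_simp
  ring

lemma qBinomial_succ (hq : ∀ n : ℕ, q ^ (n + 1) ≠ 1) (m : ℕ) (k : ℤ) :
    qBinomial q (m + 1) k = qBinomial q m k + q ^ ((m : ℤ) + 1 - k) * qBinomial q m (k - 1) := by
  rcases lt_or_ge k 1 with hk | hk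
  · rw [qBinomial_eq_zero (k := k - 1) (by omega), mul_zero, add_zero]
    rcases (show k ≤ 0 by omega).lt_or_eq with hk | rfl
    · rw [qBinomial_eq_zero (.inl hk), qBinomial_eq_zero (.inl hk)]
    · rw [qBinomial_zero hq, qBinomial_zero hq]
  rcases le_or_gt k m with hkm | hkm
  · obtain ⟨a, rfl⟩ : ∃ a : ℕ, k = a + 1 := ⟨(k - 1).toNat, by omega⟩
    obtain ⟨b, rfl⟩ : ∃ b : ℕ, m = a + 1 + b := ⟨m - (a + 1), by omega⟩
    have h₁ := qBinomial_natCast_add (q := q) (a + 1) (b + 1)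
    have h₂ := qBinomial_natCast_add (q := q) (a + 1) b
    have h₃ := qBinomial_natCast_add (q := q) a (b + 1)
    push_cast at h₁ h₂ h₃ ⊢
    rw [show a + 1 + b + 1 = a + 1 + (b + 1) by ring, h₁, h₂, add_sub_cancel_right,
      show (a : ℤ) + 1 + b + 1 - (a + 1) = ((b + 1 : ℕ) : ℤ) by push_cast; ring, zpow_natCast,
      show a + 1 + b = a + (b + 1) by ring, h₃]
    exact qPochhammer_pascal hq a b
  · rw [qBinomial_eq_zero (.inr hkm), zero_add]
    rcases (show (m : ℤ) + 1 ≤ k by omega).lt_or_eq with hkm | rfl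
    · rw [qBinomial_eq_zero (.inr (by push_cast; omega)), qBinomial_eq_zero (.inr (by omega)),
        mul_zero]
    · rw [add_sub_cancel_right, sub_self, zpow_zero, one_mul, qBinomial_self hq,
        show (m : ℤ) + 1 = ((m + 1 : ℕ) : ℤ) by push_cast; ring, qBinomial_self hq]

lemma qBinomial_succ' (hq : ∀ n : ℕ, q ^ (n + 1) ≠ 1) (m : ℕ) (k : ℤ) :
    qBinomial q (m + 1) k = q ^ k * qBinomial q m k + qBinomial q m (k - 1) := by
  have h := qBinomial_succ hq m (m + 1 - k)
  rw [← qBinomial_symm (m + 1) k, Nat.cast_succ, h, show (m : ℤ) + 1 - k = m - (k - 1) by ring,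
    qBinomial_symm, show (m : ℤ) - (k - 1) - 1 = m - k by ring, qBinomial_symm,
    show (m : ℤ) + 1 - (m - (k - 1)) = k by ring, add_comm]

end QBinomial

section FiniteProduct

variable {K : Type*} [Field K] {q z : K}

def jacobiCoeff (q : K) (N : ℕ) (t : ℤ) : K :=
  qBinomial q (2 * N) (N + t) * q ^ (t * (t + 1) / 2)

lemma jacobiCoeff_succ (hq : ∀ n : ℕ, q ^ (n + 1) ≠ 1) (hq₀ : q ≠ 0) (N : ℕ) (t : ℤ) :
    jacobiCoeff q (N + 1) t = (1 + q ^ (2 * N + 1)) * jacobiCoeff q N t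
      + q ^ N * jacobiCoeff q N (t + 1) + q ^ (N + 1) * jacobiCoeff q N (t - 1) := by
  simp only [jacobiCoeff]
  rw [show 2 * (N + 1) = 2 * N + 1 + 1 by ring, qBinomial_succ' hq, qBinomial_succ hq,
    qBinomial_succ hq, triangular_add_one, triangular_sub_one]
  push_cast
  rw [show (N : ℤ) + 1 + t - 1 = N + t by ring, show (N : ℤ) + 1 + t = N + (t + 1) by ring,
    show (N : ℤ) + t - 1 = N + (t - 1) by ring]
  simp only [zpow_add₀ hq₀, zpow_sub₀ hq₀, zpow_mul, zpow_natCast, zpow_ofNat]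
  field_simp
  ring

lemma jacobiCoeff_eq_zero {N : ℕ} {t : ℤ} (h : t < -N ∨ (N : ℤ) < t) : jacobiCoeff q N t = 0 := by
  rw [jacobiCoeff, qBinomial_eq_zero (by push_cast; omega), zero_mul]

lemma hasFiniteSupport_jacobiCoeff (q : K) (N : ℕ) : HasFiniteSupport (jacobiCoeff q N) :=
  (Set.finite_Icc (-N : ℤ) N).subset <| support_subset_iff'.2 fun _ ht =>
    jacobiCoeff_eq_zero (by simp only [Set.mem_Icc] at ht; omega)

lemma finsum_comp_add_mul_zpow (hz : z ≠ 0) (f : ℤ → K) (c : ℤ) :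
    ∑ᶠ t, f (t + c) * z ^ (-t) = z ^ c * ∑ᶠ t, f t * z ^ (-t) := by
  rw [mul_finsum, ← finsum_comp_equiv (Equiv.addRight c) (f := fun t => z ^ c * (f t * z ^ (-t)))]
  refine finsum_congr fun t => ?_
  rw [Equiv.coe_addRight, neg_add, zpow_add₀ hz, zpow_neg z c]
  field_simp

theorem finsum_jacobiCoeff_mul_zpow (hq : ∀ n : ℕ, q ^ (n + 1) ≠ 1) (hq₀ : q ≠ 0) (hz : z ≠ 0)
    (N : ℕ) : ∑ᶠ t, jacobiCoeff q N t * z ^ (-t) =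
      ∏ j ∈ range N, ((1 + z * q ^ j) * (1 + q ^ (j + 1) / z)) := by
  induction N with
  | zero =>
    rw [prod_range_zero, finsum_eq_single _ 0 fun t ht => by
      rw [jacobiCoeff_eq_zero (by omega), zero_mul]]
    simp [jacobiCoeff, qBinomial_zero hq]
  | succ N ih =>
    have hfin (c : ℤ) : HasFiniteSupport fun t => jacobiCoeff q N (t + c) * z ^ (-t) :=
      ((hasFiniteSupport_jacobiCoeff q N).comp_of_injective (add_left_injective c)).fun_mul_left _
    have hshift (c : ℤ) := finsum_comp_add_mul_zpow hz (jacobiCoeff q N) c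
    calc ∑ᶠ t, jacobiCoeff q (N + 1) t * z ^ (-t)
        = ∑ᶠ t, ((1 + q ^ (2 * N + 1)) * (jacobiCoeff q N (t + 0) * z ^ (-t))
            + q ^ N * (jacobiCoeff q N (t + 1) * z ^ (-t))
            + q ^ (N + 1) * (jacobiCoeff q N (t + -1) * z ^ (-t))) := by
          refine finsum_congr fun t => ?_
          rw [jacobiCoeff_succ hq hq₀, add_zero, ← sub_eq_add_neg]
          ring
      _ = (1 + q ^ (2 * N + 1) + q ^ N * z ^ (1 : ℤ) + q ^ (N + 1) * z ^ (-1 : ℤ)) *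
            ∑ᶠ t, jacobiCoeff q N t * z ^ (-t) := by
          rw [finsum_add_distrib (by fun_prop) (by fun_prop),
            finsum_add_distrib (by fun_prop) (by fun_prop)]
          simp only [← mul_finsum, hshift, zpow_zero]
          ring
      _ = ∏ j ∈ range (N + 1), ((1 + z * q ^ j) * (1 + q ^ (j + 1) / z)) := by
          rw [ih, prod_range_succ, zpow_one, zpow_neg_one]
          field_simp
          ring

end FiniteProduct

section Analytic

variable {q : ℂ}

lemma pow_succ_ne_one (hq : ‖q‖ < 1) (n : ℕ) : q ^ (n + 1) ≠ 1 := fun h => by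
  simpa [← norm_pow, h] using pow_lt_one₀ (norm_nonneg q) hq n.succ_ne_zero

lemma summable_norm_mul_pow (hq : ‖q‖ < 1) (a : ℂ) : Summable fun n : ℕ => ‖a * q ^ n‖ := by
  simpa [norm_mul, norm_pow] using (summable_geometric_of_lt_one (norm_nonneg q) hq).mul_left ‖a‖

lemma multipliable_one_add_mul_pow (hq : ‖q‖ < 1) (a : ℂ) :
    Multipliable fun n : ℕ => 1 + a * q ^ n :=
  multipliable_one_add_of_summable (summable_norm_mul_pow hq a)

lemma multipliable_one_sub_pow_succ (hq : ‖q‖ < 1) :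
    Multipliable fun n : ℕ => 1 - q ^ (n + 1) :=
  (multipliable_one_add_mul_pow hq (-q)).congr fun n => by ring

lemma tprod_one_sub_pow_succ_ne_zero (hq : ‖q‖ < 1) : ∏' n : ℕ, (1 - q ^ (n + 1)) ≠ 0 := by
  have h := tprod_one_add_ne_zero_of_summable (f := fun n : ℕ => -q * q ^ n)
    (fun n => by
      rw [neg_mul, ← pow_succ', ← sub_eq_add_neg, sub_ne_zero]
      exact (pow_succ_ne_one hq n).symm)
    (summable_norm_mul_pow hq (-q))
  simpa [← pow_succ', ← sub_eq_add_neg] using h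

lemma tendsto_qPochhammer (hq : ‖q‖ < 1) :
    Tendsto (qPochhammer q) atTop (𝓝 (∏' n : ℕ, (1 - q ^ (n + 1)))) :=
  (multipliable_one_sub_pow_succ hq).hasProd.tendsto_prod_nat

lemma exists_norm_qBinomial_le (hq : ‖q‖ < 1) : ∃ C, ∀ m k, ‖qBinomial q m k‖ ≤ C := by
  have hP := tendsto_qPochhammer hq
  obtain ⟨B, hB⟩ := isBounded_iff_forall_norm_le.1 (Metric.isBounded_range_of_tendsto _ hP)
  obtain ⟨D, hD⟩ := isBounded_iff_forall_norm_le.1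
    (Metric.isBounded_range_of_tendsto _ (hP.inv₀ (tprod_one_sub_pow_succ_ne_zero hq)))
  have hB₀ : 0 ≤ B := (norm_nonneg _).trans (hB _ ⟨0, rfl⟩)
  have hD₀ : 0 ≤ D := (norm_nonneg _).trans (hD _ ⟨0, rfl⟩)
  refine ⟨B * D * D, fun m k => ?_⟩
  unfold qBinomial
  split_ifs
  · rw [div_eq_mul_inv, mul_inv, ← mul_assoc, norm_mul, norm_mul]
    gcongr
    exacts [hB _ ⟨m, rfl⟩, hD _ ⟨_, rfl⟩, hD _ ⟨_, rfl⟩]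
  · rw [norm_zero]
    positivity

lemma tendsto_qBinomial_add (hq : ‖q‖ < 1) {a b : ℕ → ℕ} (ha : Tendsto a atTop atTop)
    (hb : Tendsto b atTop atTop) :
    Tendsto (fun N => qBinomial q (a N + b N) (a N)) atTop
      (𝓝 (∏' n : ℕ, (1 - q ^ (n + 1)))⁻¹) := by
  have hE := tprod_one_sub_pow_succ_ne_zero hq
  have hP := tendsto_qPochhammer hq
  have h := (hP.comp (ha.atTop_add_atTop hb)).div ((hP.comp ha).mul (hP.comp hb))
    (mul_ne_zero hE hE)
  rw [div_mul_cancel_left₀ hE] at h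
  simp only [qBinomial_natCast_add]
  exact h

lemma tendsto_qBinomial_two_mul (hq : ‖q‖ < 1) (t : ℤ) :
    Tendsto (fun N : ℕ => qBinomial q (2 * N) (N + t)) atTop
      (𝓝 (∏' n : ℕ, (1 - q ^ (n + 1)))⁻¹) := by
  have hidx (s : ℤ) : Tendsto (fun N : ℕ => ((N : ℤ) + s).toNat) atTop atTop :=
    tendsto_atTop_atTop.2 fun c => ⟨c + s.natAbs, fun N hN => by omega⟩
  refine (tendsto_qBinomial_add hq (hidx t) (hidx (-t))).congr' ?_
  filter_upwards [eventually_ge_atTop t.natAbs] with N hN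
  rw [show ((N : ℤ) + t).toNat + ((N : ℤ) + -t).toNat = 2 * N by omega]
  congr
  omega

lemma summable_pow_triangular_mul_zpow {r w : ℝ} (hr₀ : 0 < r) (hr₁ : r < 1) (hw : 0 < w) :
    Summable fun t : ℤ => r ^ (t * (t + 1) / 2) * w ^ (-t) := by
  have hnat (w : ℝ) (hw : 0 < w) :
      Summable fun n : ℕ => r ^ ((n : ℤ) * (n + 1) / 2) * w ^ (-(n : ℤ)) := by
    refine summable_of_ratio_test_tendsto_lt_one zero_lt_one
      (Eventually.of_forall fun n => by positivity) ?_
    have hratio (n : ℕ) :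
        ‖r ^ (((n + 1 : ℕ) : ℤ) * ((n + 1 : ℕ) + 1) / 2) * w ^ (-((n + 1 : ℕ) : ℤ))‖ /
          ‖r ^ ((n : ℤ) * (n + 1) / 2) * w ^ (-(n : ℤ))‖ = r ^ (n + 1) * w⁻¹ := by
      rw [Real.norm_of_nonneg (by positivity), Real.norm_of_nonneg (by positivity)]
      push_cast
      rw [triangular_add_one, zpow_add₀ hr₀.ne', neg_add, zpow_add₀ hw.ne']
      field_simp
      norm_cast
    simp_rw [hratio]
    simpa using ((tendsto_pow_atTop_nhds_zero_of_lt_one hr₀.le hr₁).comp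
      (tendsto_add_atTop_nat 1)).mul_const w⁻¹
  -- The term of index `-n` for `w` is the term of index `n` for `r / w`.
  refine .of_nat_of_neg (hnat w hw) ((hnat (r / w) (by positivity)).congr fun n => ?_)
  rw [triangular_neg, neg_neg, zpow_sub₀ hr₀.ne', div_zpow, zpow_neg, zpow_neg]
  field_simp

lemma tendsto_tsum_jacobiCoeff_mul_zpow {z : ℂ} (hq : ‖q‖ < 1) (hq₀ : q ≠ 0) (hz : z ≠ 0) :
    Tendsto (fun N : ℕ => ∑' t : ℤ, jacobiCoeff q N t * z ^ (-t)) atTop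
      (𝓝 ((∏' n : ℕ, (1 - q ^ (n + 1)))⁻¹ * ∑' t : ℤ, q ^ (t * (t + 1) / 2) * z ^ (-t))) := by
  obtain ⟨C, hC⟩ := exists_norm_qBinomial_le hq
  rw [← tsum_mul_left]
  refine tendsto_tsum_of_dominated_convergence
    ((summable_pow_triangular_mul_zpow (norm_pos_iff.2 hq₀) hq (norm_pos_iff.2 hz)).mul_left C)
    (fun t => ?_) (Eventually.of_forall fun N t => ?_)
  · simp only [jacobiCoeff, mul_assoc]
    exact (tendsto_qBinomial_two_mul hq t).mul_const _
  · rw [jacobiCoeff, mul_assoc, norm_mul, norm_mul, norm_zpow, norm_zpow]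
    gcongr
    exact hC _ _

end Analytic

lemma jacobi_triple_product_zero (z : ℂ) :
    ∑' t : ℤ, (0 : ℂ) ^ (t * (t + 1) / 2) * z ^ (-t)
      = ∏' n : ℕ,
          ((1 - (0 : ℂ) ^ (n + 1)) * (1 + z * (0 : ℂ) ^ n) * (1 + (0 : ℂ) ^ (n + 1) / z)) := by
  rw [tsum_eq_sum (s := {0, -1}) fun t ht => by
      simp only [mem_insert, mem_singleton, not_or] at ht
      rw [zero_zpow _ (triangular_ne_zero ht.1 ht.2), zero_mul],
    tprod_eq_mulSingle 0 fun n hn => by simp [hn]]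
  simp

end JacobiTripleProduct

open JacobiTripleProduct in
/-- Jacobi's triple product identity: for `|q| < 1` and `z ≠ 0`,
`∑_{t ∈ ℤ} q^{t(t+1)/2} z^{-t} = ∏_{n ≥ 1} (1 - q^n)(1 + z q^{n-1})(1 + q^n / z)`. -/
theorem jacobi_triple_product (q z : ℂ) (hq : ‖q‖ < 1) (hz : z ≠ 0) :
    ∑' t : ℤ, q ^ (t * (t + 1) / 2) * z ^ (-t)
    = ∏' n : ℕ, ((1 - q ^ (n + 1)) * (1 + z * q ^ n) * (1 + q ^ (n + 1) / z)) := by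
  rcases eq_or_ne q 0 with rfl | hq₀
  · exact jacobi_triple_product_zero z
  have hpartial (N : ℕ) : ∑' t : ℤ, jacobiCoeff q N t * z ^ (-t) =
      ∏ j ∈ range N, ((1 + z * q ^ j) * (1 + q ^ (j + 1) / z)) := by
    rw [tsum_eq_finsum ((hasFiniteSupport_jacobiCoeff q N).fun_mul_left _),
      finsum_jacobiCoeff_mul_zpow (pow_succ_ne_one hq) hq₀ hz]
  have hM : Multipliable fun n : ℕ => (1 + z * q ^ n) * (1 + q ^ (n + 1) / z) :=
    ((multipliable_one_add_mul_pow hq z).mul (multipliable_one_add_mul_pow hq (q / z))).congr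
      fun n => by ring
  have hlim := tendsto_nhds_unique (tendsto_tsum_jacobiCoeff_mul_zpow hq hq₀ hz)
    (hM.hasProd.tendsto_prod_nat.congr fun N => (hpartial N).symm)
  simp_rw [mul_assoc]
  rw [(multipliable_one_sub_pow_succ hq).tprod_mul hM, ← hlim,
    mul_inv_cancel_left₀ (tprod_one_sub_pow_succ_ne_zero hq)]
end

section
/- Euler's identity: ∑_{n≥0} z^n / (q)_n = 1/(z; q)_∞ as formal power series (or for |q| < 1, |z| < 1), where (q)_n = ∏_{j=1}^n (1 - q^j) and (z;q)_∞ = ∏_{j≥0}(1 - z q^j). -/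
/-!
Write `e(w) = ∑ wⁿ / (q)ₙ` (`qExp q w`), which converges for `‖w‖ < 1` by the ratio test. Since
`(q)ₙ₊₁ = (q)ₙ (1 - qⁿ⁺¹)`, comparing coefficients gives `e(w) (1 - w) = e(q w)`; iterating,
`e(z) ∏_{j<N} (1 - z qʲ) = e(qᴺ z)`. As `N → ∞` the left side tends to `e(z) (z; q)_∞` and,
by continuity of `e` at `0` (dominated convergence for series), the right side tends to
`e(0) = 1`.
-/

open Finset Filter Topology

section QExp

variable {𝕜 : Type*} [NormedField 𝕜] {q : 𝕜}

noncomputable def qExp (q w : 𝕜) : 𝕜 := ∑' n : ℕ, w ^ n / ∏ j ∈ range n, (1 - q ^ (j + 1))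

theorem qExp_zero (q : 𝕜) : qExp q 0 = 1 := by
  rw [qExp, tsum_eq_single 0 fun n hn => by simp [zero_pow hn]]
  simp

theorem one_sub_ne_zero_of_norm_lt_one {w : 𝕜} (hw : ‖w‖ < 1) : 1 - w ≠ 0 := by
  rw [sub_ne_zero]
  rintro rfl
  simp at hw

theorem one_sub_pow_succ_ne_zero (hq : ‖q‖ < 1) (j : ℕ) : 1 - q ^ (j + 1) ≠ 0 :=
  one_sub_ne_zero_of_norm_lt_one <| by
    simpa [norm_pow] using pow_lt_one₀ (norm_nonneg q) hq j.succ_ne_zero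

theorem norm_mul_lt_one {a w : 𝕜} (ha : ‖a‖ ≤ 1) (hw : ‖w‖ < 1) : ‖a * w‖ < 1 :=
  (norm_mul_le _ _).trans_lt (mul_lt_one_of_nonneg_of_lt_one_right ha (norm_nonneg w) hw)

theorem summable_pow_div_norm_prod_one_sub_pow (hq : ‖q‖ < 1) {r : ℝ} (hr0 : 0 ≤ r)
    (hr : r < 1) : Summable fun n : ℕ => r ^ n / ‖∏ j ∈ range n, (1 - q ^ (j + 1))‖ := by
  obtain ⟨s, hrs, hs1⟩ := exists_between hr
  refine summable_of_ratio_norm_eventually_le hs1 ?_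
  have hratio : Tendsto (fun n : ℕ => r / ‖1 - q ^ (n + 1)‖) atTop (𝓝 (r / ‖(1 : 𝕜) - 0‖)) :=
    tendsto_const_nhds.div (((tendsto_pow_atTop_nhds_zero_of_norm_lt_one hq).comp
      (tendsto_add_atTop_nat 1)).const_sub 1).norm (by simp)
  rw [sub_zero, norm_one, div_one] at hratio
  filter_upwards [hratio.eventually_le_const hrs] with n hn
  rw [prod_range_succ, Real.norm_of_nonneg (by positivity), Real.norm_of_nonneg (by positivity)]
  calc r ^ (n + 1) / ‖(∏ j ∈ range n, (1 - q ^ (j + 1))) * (1 - q ^ (n + 1))‖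
      = r / ‖1 - q ^ (n + 1)‖ * (r ^ n / ‖∏ j ∈ range n, (1 - q ^ (j + 1))‖) := by
        rw [norm_mul, pow_succ]; ring
    _ ≤ s * (r ^ n / ‖∏ j ∈ range n, (1 - q ^ (j + 1))‖) := by gcongr

variable [CompleteSpace 𝕜]

theorem summable_pow_div_prod_one_sub_pow (hq : ‖q‖ < 1) {w : 𝕜} (hw : ‖w‖ < 1) :
    Summable fun n : ℕ => w ^ n / ∏ j ∈ range n, (1 - q ^ (j + 1)) :=
  .of_norm <| by
    simpa [norm_pow] using summable_pow_div_norm_prod_one_sub_pow hq (norm_nonneg w) hw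

theorem continuousAt_qExp (hq : ‖q‖ < 1) {w : 𝕜} (hw : ‖w‖ < 1) :
    ContinuousAt (qExp q) w := by
  obtain ⟨r, hwr, hr1⟩ := exists_between hw
  refine tendsto_tsum_of_dominated_convergence
    (summable_pow_div_norm_prod_one_sub_pow hq ((norm_nonneg w).trans hwr.le) hr1)
    (fun n => ((continuous_pow n).tendsto w).div_const _) ?_
  filter_upwards [(continuous_norm.tendsto w).eventually_lt_const hwr] with x hx n
  rw [norm_div, norm_pow]
  gcongr

theorem qExp_mul_one_sub (hq : ‖q‖ < 1) {w : 𝕜} (hw : ‖w‖ < 1) :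
    qExp q w * (1 - w) = qExp q (q * w) := by
  have hs := summable_pow_div_prod_one_sub_pow hq hw
  have hs' := summable_pow_div_prod_one_sub_pow hq (norm_mul_lt_one hq.le hw)
  have hsucc (n : ℕ) : w ^ (n + 1) / ∏ j ∈ range (n + 1), (1 - q ^ (j + 1))
      - (q * w) ^ (n + 1) / ∏ j ∈ range (n + 1), (1 - q ^ (j + 1))
      = w * (w ^ n / ∏ j ∈ range n, (1 - q ^ (j + 1))) := by
    have := one_sub_pow_succ_ne_zero hq n
    rw [prod_range_succ]
    field_simp
    ring
  suffices qExp q w - qExp q (q * w) = w * qExp q w by linear_combination this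
  rw [qExp, qExp, ← hs.tsum_sub hs', (hs.sub hs').tsum_eq_zero_add, tsum_congr hsucc,
    tsum_mul_left]
  simp

theorem qExp_mul_prod_one_sub (hq : ‖q‖ < 1) {z : 𝕜} (hz : ‖z‖ < 1) (N : ℕ) :
    qExp q z * ∏ j ∈ range N, (1 - z * q ^ j) = qExp q (q ^ N * z) := by
  induction N with
  | zero => simp
  | succ N ih =>
    have hqN : ‖q ^ N‖ ≤ 1 := norm_pow q N ▸ pow_le_one₀ (norm_nonneg q) hq.le
    rw [prod_range_succ, ← mul_assoc, ih, mul_comm z, qExp_mul_one_sub hq (norm_mul_lt_one hqN hz),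
      pow_succ', mul_assoc]

theorem multipliable_one_sub_mul_pow (hq : ‖q‖ < 1) (z : 𝕜) :
    Multipliable fun j : ℕ => 1 - z * q ^ j := by
  simp_rw [sub_eq_add_neg]
  apply multipliable_one_add_of_summable
  simpa [norm_pow] using (summable_geometric_of_lt_one (norm_nonneg q) hq).mul_left ‖z‖

theorem qExp_mul_tprod_one_sub (hq : ‖q‖ < 1) {z : 𝕜} (hz : ‖z‖ < 1) :
    qExp q z * ∏' j : ℕ, (1 - z * q ^ j) = 1 := by
  have hpartial :=
    ((multipliable_one_sub_mul_pow hq z).hasProd.tendsto_prod_nat).const_mul (qExp q z)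
  have hshift : Tendsto (fun N : ℕ => q ^ N * z) atTop (𝓝 0) := by
    simpa using (tendsto_pow_atTop_nhds_zero_of_norm_lt_one hq).mul_const z
  refine tendsto_nhds_unique hpartial ?_
  simp_rw [qExp_mul_prod_one_sub hq hz, ← qExp_zero q]
  exact (continuousAt_qExp hq (by simp)).tendsto.comp hshift

end QExp

/-- Euler's identity: for `|q| < 1` and `|z| < 1`,
`∑_{n ≥ 0} z^n / (q)_n = 1 / (z; q)_∞`, where `(q)_n = ∏_{j=1}^n (1 - q^j)`
and `(z; q)_∞ = ∏_{j ≥ 0} (1 - z q^j)`. -/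
theorem euler_identity_inv (q z : ℂ) (hq : ‖q‖ < 1) (hz : ‖z‖ < 1) :
    ∑' n : ℕ, z ^ n / ∏ j ∈ Finset.range n, (1 - q ^ (j + 1))
    = (∏' j : ℕ, (1 - z * q ^ j))⁻¹ :=
  eq_inv_of_mul_eq_one_left (qExp_mul_tprod_one_sub hq hz)
end

section
/- For integers 0 ≤ i, j, k, l < m, the rational function ρ_2(i,j,k,l,q) := [∑ over the four choices of one variable x ∈ {i,j,k,l} of q^{m-x}(1-q^x)/(1-q^{m-x})] - [∑ over the four choices of three variables x,y,z from {i,j,k,l} of q^{2m-x-y-z}(1-q^x)(1-q^y)(1-q^z)/((1-q^{m-x})(1-q^{m-y})(1-q^{m-z}))] + (1+q^m)[1 - (1-q^i)(1-q^j)(1-q^k)(1-q^l)/((1-q^{m-i})(1-q^{m-j})(1-q^{m-k})(1-q^{m-l}))] equals (q^{2m} - q^{i+j+k+l})·[(1+q^m)(1-q^i)(1-q^j)(1-q^k)(1-q^l) - (1-q^m)^3] / ((q^m-q^i)(q^m-q^j)(q^m-q^k)(q^m-q^l)). -/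
/-!
Put `e = q^m` and `a = q^i`, ..., `d = q^l`. Since `1 - q^(m-x) = (q^x - q^m)/q^x`, every
quotient in `ρ₂` is a power of `q` times a product of the ratios `(1 - x)/(x - e)` with
`x ∈ {a, b, c, d}`, and the powers of `q` collapse to `e`, `e²` and `abcd`. The theorem becomes an
identity between rational functions of `a, b, c, d, e`, checked by clearing denominators.
-/

section
variable {K : Type*} [Field K]

theorem rho2_rational_identity (a b c d e : K)
    (ha : e ≠ a) (hb : e ≠ b) (hc : e ≠ c) (hd : e ≠ d) :
    e * ((1 - a) / (a - e) + (1 - b) / (b - e) + (1 - c) / (c - e) + (1 - d) / (d - e))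
      - e ^ 2 * ((1 - a) / (a - e) * ((1 - b) / (b - e)) * ((1 - c) / (c - e))
        + (1 - a) / (a - e) * ((1 - b) / (b - e)) * ((1 - d) / (d - e))
        + (1 - a) / (a - e) * ((1 - c) / (c - e)) * ((1 - d) / (d - e))
        + (1 - b) / (b - e) * ((1 - c) / (c - e)) * ((1 - d) / (d - e)))
      + (1 + e) * (1 - a * b * c * d * ((1 - a) / (a - e) * ((1 - b) / (b - e))
        * ((1 - c) / (c - e)) * ((1 - d) / (d - e))))
    = (e ^ 2 - a * b * c * d) * ((1 + e) * (1 - a) * (1 - b) * (1 - c) * (1 - d) - (1 - e) ^ 3)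
      / ((e - a) * (e - b) * (e - c) * (e - d)) := by
  have := sub_ne_zero.2 ha; have := sub_ne_zero.2 hb
  have := sub_ne_zero.2 hc; have := sub_ne_zero.2 hd
  field_simp
  ring

variable {q : K}

theorem one_sub_pow_div_one_sub_pow_sub (hq : q ≠ 0) {m n : ℕ} (h : n ≤ m) :
    (1 - q ^ n) / (1 - q ^ (m - n)) = q ^ n * ((1 - q ^ n) / (q ^ n - q ^ m)) := by
  rw [pow_sub₀ q hq h, ← div_eq_mul_inv, one_sub_div (pow_ne_zero n hq), div_div_eq_mul_div,
    mul_comm (1 - q ^ n), mul_div_assoc]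

theorem pow_sub_mul_one_sub_pow_div (hq : q ≠ 0) {m n : ℕ} (h : n ≤ m) :
    q ^ (m - n) * (1 - q ^ n) / (1 - q ^ (m - n)) = q ^ m * ((1 - q ^ n) / (q ^ n - q ^ m)) := by
  rw [mul_div_assoc, one_sub_pow_div_one_sub_pow_sub hq h, ← mul_assoc, ← pow_add,
    Nat.sub_add_cancel h]

theorem zpow_two_mul_sub_mul_one_sub_pow_div (hq : q ≠ 0) {m x y z : ℕ}
    (hx : x ≤ m) (hy : y ≤ m) (hz : z ≤ m) :
    q ^ (2 * (m : ℤ) - x - y - z) * (1 - q ^ x) * (1 - q ^ y) * (1 - q ^ z) /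
        ((1 - q ^ (m - x)) * (1 - q ^ (m - y)) * (1 - q ^ (m - z)))
      = (q ^ m) ^ 2 * ((1 - q ^ x) / (q ^ x - q ^ m) * ((1 - q ^ y) / (q ^ y - q ^ m))
          * ((1 - q ^ z) / (q ^ z - q ^ m))) := by
  rw [mul_assoc, mul_assoc, mul_div_assoc, ← mul_assoc, ← div_mul_div_comm, ← div_mul_div_comm,
    one_sub_pow_div_one_sub_pow_sub hq hx, one_sub_pow_div_one_sub_pow_sub hq hy,
    one_sub_pow_div_one_sub_pow_sub hq hz, zpow_sub₀ hq, zpow_sub₀ hq, zpow_sub₀ hq, zpow_mul,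
    zpow_natCast, zpow_natCast, zpow_natCast, zpow_natCast]
  field_simp
  ring

theorem prod_one_sub_pow_div (hq : q ≠ 0) {m i j k l : ℕ}
    (hi : i ≤ m) (hj : j ≤ m) (hk : k ≤ m) (hl : l ≤ m) :
    (1 - q ^ i) * (1 - q ^ j) * (1 - q ^ k) * (1 - q ^ l) /
        ((1 - q ^ (m - i)) * (1 - q ^ (m - j)) * (1 - q ^ (m - k)) * (1 - q ^ (m - l)))
      = q ^ i * q ^ j * q ^ k * q ^ l * ((1 - q ^ i) / (q ^ i - q ^ m)
          * ((1 - q ^ j) / (q ^ j - q ^ m)) * ((1 - q ^ k) / (q ^ k - q ^ m))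
          * ((1 - q ^ l) / (q ^ l - q ^ m))) := by
  rw [← div_mul_div_comm, ← div_mul_div_comm, ← div_mul_div_comm,
    one_sub_pow_div_one_sub_pow_sub hq hi, one_sub_pow_div_one_sub_pow_sub hq hj,
    one_sub_pow_div_one_sub_pow_sub hq hk, one_sub_pow_div_one_sub_pow_sub hq hl]
  ring
end

theorem rho2_closed_form_general {K : Type*} [Field K] (q : K) (i j k l m : ℕ)
    (hi : i < m) (hj : j < m) (hk : k < m) (hl : l < m) (hq : q ≠ 0)
    (hei : q ^ m ≠ q ^ i) (hej : q ^ m ≠ q ^ j)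
    (hek : q ^ m ≠ q ^ k) (hel : q ^ m ≠ q ^ l) :
    (q ^ (m - i) * (1 - q ^ i) / (1 - q ^ (m - i))
      + q ^ (m - j) * (1 - q ^ j) / (1 - q ^ (m - j))
      + q ^ (m - k) * (1 - q ^ k) / (1 - q ^ (m - k))
      + q ^ (m - l) * (1 - q ^ l) / (1 - q ^ (m - l)))
    - (q ^ (2 * (m : ℤ) - i - j - k) * (1 - q ^ i) * (1 - q ^ j) * (1 - q ^ k) /
          ((1 - q ^ (m - i)) * (1 - q ^ (m - j)) * (1 - q ^ (m - k)))
      + q ^ (2 * (m : ℤ) - i - j - l) * (1 - q ^ i) * (1 - q ^ j) * (1 - q ^ l) /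
          ((1 - q ^ (m - i)) * (1 - q ^ (m - j)) * (1 - q ^ (m - l)))
      + q ^ (2 * (m : ℤ) - i - k - l) * (1 - q ^ i) * (1 - q ^ k) * (1 - q ^ l) /
          ((1 - q ^ (m - i)) * (1 - q ^ (m - k)) * (1 - q ^ (m - l)))
      + q ^ (2 * (m : ℤ) - j - k - l) * (1 - q ^ j) * (1 - q ^ k) * (1 - q ^ l) /
          ((1 - q ^ (m - j)) * (1 - q ^ (m - k)) * (1 - q ^ (m - l))))
    + (1 + q ^ m) *
        (1 - (1 - q ^ i) * (1 - q ^ j) * (1 - q ^ k) * (1 - q ^ l) /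
          ((1 - q ^ (m - i)) * (1 - q ^ (m - j)) * (1 - q ^ (m - k)) * (1 - q ^ (m - l))))
    = (q ^ (2 * m) - q ^ (i + j + k + l)) *
        ((1 + q ^ m) * (1 - q ^ i) * (1 - q ^ j) * (1 - q ^ k) * (1 - q ^ l)
          - (1 - q ^ m) ^ 3) /
        ((q ^ m - q ^ i) * (q ^ m - q ^ j) * (q ^ m - q ^ k) * (q ^ m - q ^ l)) := by
  rw [pow_sub_mul_one_sub_pow_div hq hi.le, pow_sub_mul_one_sub_pow_div hq hj.le,
    pow_sub_mul_one_sub_pow_div hq hk.le, pow_sub_mul_one_sub_pow_div hq hl.le,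
    zpow_two_mul_sub_mul_one_sub_pow_div hq hi.le hj.le hk.le,
    zpow_two_mul_sub_mul_one_sub_pow_div hq hi.le hj.le hl.le,
    zpow_two_mul_sub_mul_one_sub_pow_div hq hi.le hk.le hl.le,
    zpow_two_mul_sub_mul_one_sub_pow_div hq hj.le hk.le hl.le,
    prod_one_sub_pow_div hq hi.le hj.le hk.le hl.le, ← mul_add, ← mul_add, ← mul_add, ← mul_add,
    ← mul_add, ← mul_add, pow_mul', pow_add, pow_add, pow_add]
  exact rho2_rational_identity _ _ _ _ _ hei hej hek hel

/-- For `0 ≤ i, j, k, l < m`, the rational function `ρ₂(i,j,k,l,q)` equals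
`(q^{2m} - q^{i+j+k+l})·[(1+q^m)(1-q^i)(1-q^j)(1-q^k)(1-q^l) - (1-q^m)³]
  / ((q^m-q^i)(q^m-q^j)(q^m-q^k)(q^m-q^l))`. -/
theorem rho2_closed_form {K : Type*} [Field K] (q : K) (i j k l m : ℕ)
    (hi : i < m) (hj : j < m) (hk : k < m) (hl : l < m) (hq : q ≠ 0)
    (hdi : 1 - q ^ (m - i) ≠ 0) (hdj : 1 - q ^ (m - j) ≠ 0)
    (hdk : 1 - q ^ (m - k) ≠ 0) (hdl : 1 - q ^ (m - l) ≠ 0)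
    (hei : q ^ m ≠ q ^ i) (hej : q ^ m ≠ q ^ j)
    (hek : q ^ m ≠ q ^ k) (hel : q ^ m ≠ q ^ l) :
    (q ^ (m - i) * (1 - q ^ i) / (1 - q ^ (m - i))
      + q ^ (m - j) * (1 - q ^ j) / (1 - q ^ (m - j))
      + q ^ (m - k) * (1 - q ^ k) / (1 - q ^ (m - k))
      + q ^ (m - l) * (1 - q ^ l) / (1 - q ^ (m - l)))
    - (q ^ (2 * (m : ℤ) - i - j - k) * (1 - q ^ i) * (1 - q ^ j) * (1 - q ^ k) /
          ((1 - q ^ (m - i)) * (1 - q ^ (m - j)) * (1 - q ^ (m - k)))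
      + q ^ (2 * (m : ℤ) - i - j - l) * (1 - q ^ i) * (1 - q ^ j) * (1 - q ^ l) /
          ((1 - q ^ (m - i)) * (1 - q ^ (m - j)) * (1 - q ^ (m - l)))
      + q ^ (2 * (m : ℤ) - i - k - l) * (1 - q ^ i) * (1 - q ^ k) * (1 - q ^ l) /
          ((1 - q ^ (m - i)) * (1 - q ^ (m - k)) * (1 - q ^ (m - l)))
      + q ^ (2 * (m : ℤ) - j - k - l) * (1 - q ^ j) * (1 - q ^ k) * (1 - q ^ l) /
          ((1 - q ^ (m - j)) * (1 - q ^ (m - k)) * (1 - q ^ (m - l))))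
    + (1 + q ^ m) *
        (1 - (1 - q ^ i) * (1 - q ^ j) * (1 - q ^ k) * (1 - q ^ l) /
          ((1 - q ^ (m - i)) * (1 - q ^ (m - j)) * (1 - q ^ (m - k)) * (1 - q ^ (m - l))))
    = (q ^ (2 * m) - q ^ (i + j + k + l)) *
        ((1 + q ^ m) * (1 - q ^ i) * (1 - q ^ j) * (1 - q ^ k) * (1 - q ^ l)
          - (1 - q ^ m) ^ 3) /
        ((q ^ m - q ^ i) * (q ^ m - q ^ j) * (q ^ m - q ^ k) * (q ^ m - q ^ l)) :=
  rho2_closed_form_general q i j k l m hi hj hk hl hq hei hej hek hel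
end

section
/- For integers 0 ≤ i, j, k, l < m with i + j + k + l = 2m, the expression ρ_2(i,j,k,l,q) (defined as the symmetric sum of four 'single' terms q^{m-x}(1-q^x)/(1-q^{m-x}), minus the four 'triple' terms q^{2m-x-y-z}(1-q^x)(1-q^y)(1-q^z)/((1-q^{m-x})(1-q^{m-y})(1-q^{m-z})), plus (1+q^m)[1 - ∏_{x∈{i,j,k,l}}(1-q^x)/(1-q^{m-x})]) is identically zero. -/
/-!
In the monomials `xₐ = q^(m-a)`, `yₐ = q^a` and `Q = q^m`, the only relations the identity needs
are `xₐ yₐ = Q` and, because `i + j + k + l = 2m`, `xₐ x_b = y_c y_d` for complementary pairs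
`{a, b}`, `{c, d}`. After clearing the denominators `1 - xₐ`, the vanishing of `ρ₂` is membership
of a polynomial in the ideal generated by these binomial relations.
-/

/-- `ρ₂(i,j,k,l,q)` in the monomials `xₐ = q^(m-a)`, `yₐ = q^a`, `Q = q^m`; the triple term
omitting `a` has numerator monomial `q^(2m - (other three indices)) = yₐ`. -/
def rho2 {K : Type*} [Field K] (x₁ x₂ x₃ x₄ y₁ y₂ y₃ y₄ Q : K) : K :=
  (x₁ * (1 - y₁) / (1 - x₁) + x₂ * (1 - y₂) / (1 - x₂)
      + x₃ * (1 - y₃) / (1 - x₃) + x₄ * (1 - y₄) / (1 - x₄))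
    - (y₄ * (1 - y₁) * (1 - y₂) * (1 - y₃) / ((1 - x₁) * (1 - x₂) * (1 - x₃))
      + y₃ * (1 - y₁) * (1 - y₂) * (1 - y₄) / ((1 - x₁) * (1 - x₂) * (1 - x₄))
      + y₂ * (1 - y₁) * (1 - y₃) * (1 - y₄) / ((1 - x₁) * (1 - x₃) * (1 - x₄))
      + y₁ * (1 - y₂) * (1 - y₃) * (1 - y₄) / ((1 - x₂) * (1 - x₃) * (1 - x₄)))
    + (1 + Q) * (1 - (1 - y₁) * (1 - y₂) * (1 - y₃) * (1 - y₄) /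
        ((1 - x₁) * (1 - x₂) * (1 - x₃) * (1 - x₄)))

theorem rho2_eq_zero_of_mul_eq {K : Type*} [Field K] {x₁ x₂ x₃ x₄ y₁ y₂ y₃ y₄ Q : K}
    (hx₁ : 1 - x₁ ≠ 0) (hx₂ : 1 - x₂ ≠ 0) (hx₃ : 1 - x₃ ≠ 0) (hx₄ : 1 - x₄ ≠ 0)
    (h₁ : x₁ * y₁ = Q) (h₂ : x₂ * y₂ = Q) (h₃ : x₃ * y₃ = Q) (h₄ : x₄ * y₄ = Q)
    (h₁₂ : x₁ * x₂ = y₃ * y₄) (h₁₃ : x₁ * x₃ = y₂ * y₄) (h₁₄ : x₁ * x₄ = y₂ * y₃)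
    (h₂₃ : x₂ * x₃ = y₁ * y₄) (h₂₄ : x₂ * x₄ = y₁ * y₃) (h₃₄ : x₃ * x₄ = y₁ * y₂) :
    rho2 x₁ x₂ x₃ x₄ y₁ y₂ y₃ y₄ Q = 0 := by
  unfold rho2
  field_simp
  grind

theorem pow_mul_pow_eq_of_add_eq {M : Type*} [Monoid M] (q : M) {a b c d : ℕ}
    (h : a + b = c + d) : q ^ a * q ^ b = q ^ c * q ^ d := by
  rw [← pow_add, ← pow_add, h]

/-- For `0 ≤ i, j, k, l < m` with `i + j + k + l = 2m`, the expression
`ρ₂(i,j,k,l,q)` vanishes identically. -/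
theorem rho2_eq_zero {K : Type*} [Field K] (q : K) (i j k l m : ℕ)
    (hi : i < m) (hj : j < m) (hk : k < m) (hl : l < m)
    (hsum : i + j + k + l = 2 * m)
    (hdi : 1 - q ^ (m - i) ≠ 0) (hdj : 1 - q ^ (m - j) ≠ 0)
    (hdk : 1 - q ^ (m - k) ≠ 0) (hdl : 1 - q ^ (m - l) ≠ 0) :
    (q ^ (m - i) * (1 - q ^ i) / (1 - q ^ (m - i))
      + q ^ (m - j) * (1 - q ^ j) / (1 - q ^ (m - j))
      + q ^ (m - k) * (1 - q ^ k) / (1 - q ^ (m - k))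
      + q ^ (m - l) * (1 - q ^ l) / (1 - q ^ (m - l)))
    - (q ^ (2 * m - i - j - k) * (1 - q ^ i) * (1 - q ^ j) * (1 - q ^ k) /
          ((1 - q ^ (m - i)) * (1 - q ^ (m - j)) * (1 - q ^ (m - k)))
      + q ^ (2 * m - i - j - l) * (1 - q ^ i) * (1 - q ^ j) * (1 - q ^ l) /
          ((1 - q ^ (m - i)) * (1 - q ^ (m - j)) * (1 - q ^ (m - l)))
      + q ^ (2 * m - i - k - l) * (1 - q ^ i) * (1 - q ^ k) * (1 - q ^ l) /
          ((1 - q ^ (m - i)) * (1 - q ^ (m - k)) * (1 - q ^ (m - l)))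
      + q ^ (2 * m - j - k - l) * (1 - q ^ j) * (1 - q ^ k) * (1 - q ^ l) /
          ((1 - q ^ (m - j)) * (1 - q ^ (m - k)) * (1 - q ^ (m - l))))
    + (1 + q ^ m) *
        (1 - (1 - q ^ i) * (1 - q ^ j) * (1 - q ^ k) * (1 - q ^ l) /
          ((1 - q ^ (m - i)) * (1 - q ^ (m - j)) * (1 - q ^ (m - k)) * (1 - q ^ (m - l))))
    = 0 := by
  rw [show 2 * m - i - j - k = l by omega, show 2 * m - i - j - l = k by omega,
    show 2 * m - i - k - l = j by omega, show 2 * m - j - k - l = i by omega]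
  have pair {a b c d : ℕ} (h : a + b = c + d) := pow_mul_pow_eq_of_add_eq q h
  exact rho2_eq_zero_of_mul_eq hdi hdj hdk hdl
    (pow_sub_mul_pow q hi.le) (pow_sub_mul_pow q hj.le)
    (pow_sub_mul_pow q hk.le) (pow_sub_mul_pow q hl.le)
    (pair (by omega)) (pair (by omega)) (pair (by omega))
    (pair (by omega)) (pair (by omega)) (pair (by omega))
end

section
/- The function H(A,B,C,z) = (1/z + ABCz)·(-q²/z; q)_∞ (q²zABC; q)_∞ · ₃φ₂(-qA, -qB, -qC; q²zABC, -q²/z; q, q) satisfies the anti-symmetry H(A,B,C,z) = -H(A,B,C, -1/(ABCz)), and consequently the constant term in z of the Laurent expansion of H(A,B,C,z) is zero. -/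
open Finset

/-- Finite `q`-Pochhammer symbol `(x; q)_n = ∏_{j=0}^{n-1} (1 - x q^j)` in `ℂ`. -/
noncomputable def pochN (q x : ℂ) (n : ℕ) : ℂ :=
  ∏ j ∈ Finset.range n, (1 - x * q ^ j)

/-- Infinite `q`-Pochhammer symbol `(x; q)_∞ = ∏_{j≥0} (1 - x q^j)` in `ℂ`. -/
noncomputable def pochInf (q x : ℂ) : ℂ :=
  ∏' j : ℕ, (1 - x * q ^ j)

/-- The basic hypergeometric series
`₃φ₂(a₁,a₂,a₃; b₁,b₂; q, z) = ∑_{n≥0} (a₁;q)_n (a₂;q)_n (a₃;q)_n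
  / ((q;q)_n (b₁;q)_n (b₂;q)_n) · zⁿ`. -/
noncomputable def phi32 (q a₁ a₂ a₃ b₁ b₂ z : ℂ) : ℂ :=
  ∑' n : ℕ, (pochN q a₁ n * pochN q a₂ n * pochN q a₃ n) /
      (pochN q q n * pochN q b₁ n * pochN q b₂ n) * z ^ n

/-- The function
`H(A,B,C,z) = (1/z + ABCz)(-q²/z; q)_∞ (q²zABC; q)_∞
  ₃φ₂(-qA, -qB, -qC; q²zABC, -q²/z; q, q)`. -/
noncomputable def Hfun (q A B C z : ℂ) : ℂ :=
  (1 / z + A * B * C * z) * pochInf q (-(q ^ 2) / z) * pochInf q (q ^ 2 * z * A * B * C) *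
    phi32 q (-(q * A)) (-(q * B)) (-(q * C)) (q ^ 2 * z * A * B * C) (-(q ^ 2) / z) q

/-!
Since `₃φ₂` is symmetric in its two lower parameters, the involution `z ↦ -1/(ABCz)`, which
exchanges `q²zABC` and `-q²/z` and changes the sign of `1/z + ABCz`, changes the sign of `H`.
Reflecting a Laurent expansion `∑ F t zᵗ` of `H` through this involution therefore gives a second
expansion `∑ F (-t) (-ABC)ᵗ zᵗ` of `-H`, with the same constant term `F 0`. Laurent coefficients
are unique, being the Fourier coefficients of the sum on the unit circle, so `F 0 = -F 0`.
-/

section LaurentUniqueness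

open MeasureTheory AddCircle

theorem fourierCoeff_tsum_mul_fourier {T : ℝ} [Fact (0 < T)] {G : ℤ → ℂ} (hG : Summable G)
    (n : ℤ) : fourierCoeff (fun x : AddCircle T => ∑' t, G t * fourier t x) n = G n := by
  have hnorm : ∀ (m : ℤ) (x : AddCircle T), ‖fourier m x‖ = 1 := fun _ _ => Circle.norm_coe _
  have hint : ∀ t, Integrable (fun x : AddCircle T => fourier (-n) x * (G t * fourier t x))
      haarAddCircle := fun _ =>
    Continuous.integrable_of_hasCompactSupport (by fun_prop) (.of_compactSpace _)
  have hsum : Summable fun t =>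
      ∫ x : AddCircle T, ‖fourier (-n) x * (G t * fourier t x)‖ ∂haarAddCircle := by
    simpa only [norm_mul, hnorm, one_mul, mul_one, integral_const, probReal_univ, one_smul]
      using hG.norm
  have hterm : ∀ t, ∫ x : AddCircle T, fourier (-n) x * (G t * fourier t x) ∂haarAddCircle
      = G t * fourierCoeff (fourier t : AddCircle T → ℂ) n := by
    intro t
    simp_rw [fourierCoeff, smul_eq_mul, mul_left_comm _ (G t), integral_const_mul]
  simp_rw [fourierCoeff, smul_eq_mul, ← tsum_mul_left]
  rw [← integral_tsum_of_summable_integral_norm hint hsum, tsum_congr hterm]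
  simp [fourierCoeff_fourier, Pi.single_apply]

theorem eq_of_forall_norm_eq_one_hasSum_mul_zpow {F G : ℤ → ℂ} {f : ℂ → ℂ}
    (hF : ∀ z : ℂ, ‖z‖ = 1 → HasSum (fun t => F t * z ^ t) (f z))
    (hG : ∀ z : ℂ, ‖z‖ = 1 → HasSum (fun t => G t * z ^ t) (f z)) : F = G := by
  have summable_of_hasSum {F : ℤ → ℂ}
      (h : ∀ z : ℂ, ‖z‖ = 1 → HasSum (fun t => F t * z ^ t) (f z)) : Summable F := by
    simpa using (h 1 norm_one).summable
  have hfourier (t : ℤ) (x : AddCircle (1 : ℝ)) : fourier t x = (toCircle x : ℂ) ^ t := by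
    rw [fourier_apply, toCircle_zsmul, Circle.coe_zpow]
  funext n
  rw [← fourierCoeff_tsum_mul_fourier (T := 1) (summable_of_hasSum hF) n,
    ← fourierCoeff_tsum_mul_fourier (T := 1) (summable_of_hasSum hG) n]
  congr 1
  funext x
  simp only [hfourier]
  exact (hF _ (Circle.norm_coe _)).tsum_eq.trans (hG _ (Circle.norm_coe _)).tsum_eq.symm

end LaurentUniqueness

theorem hasSum_mul_inv_zpow_iff {K : Type*} [DivisionRing K] [TopologicalSpace K] {F : ℤ → K}
    {w s : K} : HasSum (fun t => F t * w⁻¹ ^ t) s ↔ HasSum (fun t => F (-t) * w ^ t) s := by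
  rw [← (Equiv.neg ℤ).hasSum_iff]
  simp [Function.comp_def, zpow_neg, inv_zpow']

theorem phi32_swap_lower (q a₁ a₂ a₃ b₁ b₂ z : ℂ) :
    phi32 q a₁ a₂ a₃ b₁ b₂ z = phi32 q a₁ a₂ a₃ b₂ b₁ z := by
  simp only [phi32, mul_right_comm _ (pochN q b₁ _)]

theorem Hfun_neg_inv {q A B C : ℂ} (hABC : A * B * C ≠ 0) (z : ℂ) :
    Hfun q A B C (-1 / (A * B * C * z)) = -Hfun q A B C z := by
  rcases eq_or_ne z 0 with rfl | hz
  · simp [Hfun]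
  obtain ⟨⟨hA, hB⟩, hC⟩ : (A ≠ 0 ∧ B ≠ 0) ∧ C ≠ 0 := by simpa only [mul_ne_zero_iff] using hABC
  have hfactor : 1 / (-1 / (A * B * C * z)) + A * B * C * (-1 / (A * B * C * z))
      = -(1 / z + A * B * C * z) := by
    field_simp
    ring
  have hswap₁ : -(q ^ 2) / (-1 / (A * B * C * z)) = q ^ 2 * z * A * B * C := by
    field_simp
  have hswap₂ : q ^ 2 * (-1 / (A * B * C * z)) * A * B * C = -(q ^ 2) / z := by
    field_simp
  rw [Hfun, Hfun, hfactor, hswap₁, hswap₂, phi32_swap_lower]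
  ring

theorem Hfun_antisymm_and_constant_term_general (q A B C : ℂ)
    (hABC : A * B * C ≠ 0) :
    (∀ z : ℂ, z ≠ 0 → Hfun q A B C z = -Hfun q A B C (-1 / (A * B * C * z))) ∧
    (∀ F : ℤ → ℂ, (∀ z : ℂ, z ≠ 0 →
        HasSum (fun t : ℤ => F t * z ^ t) (Hfun q A B C z)) → F 0 = 0) := by
  refine ⟨fun z _ => by rw [Hfun_neg_inv hABC z, neg_neg], fun F hF => ?_⟩
  have hne : ∀ z : ℂ, ‖z‖ = 1 → z ≠ 0 := fun z hz => norm_ne_zero_iff.mp (hz ▸ one_ne_zero)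
  have hreflected : ∀ z : ℂ, ‖z‖ = 1 →
      HasSum (fun t => F (-t) * (-(A * B * C)) ^ t * z ^ t) (-Hfun q A B C z) := by
    intro z hz
    have h := hF _ (div_ne_zero (neg_ne_zero.mpr one_ne_zero) (mul_ne_zero hABC (hne z hz)))
    have hinv : -1 / (A * B * C * z) = (-(A * B * C) * z)⁻¹ := by ring
    rw [Hfun_neg_inv hABC z, hinv, hasSum_mul_inv_zpow_iff] at h
    simpa only [mul_zpow, mul_assoc] using h
  have hnegated : ∀ z : ℂ, ‖z‖ = 1 → HasSum (fun t => -F t * z ^ t) (-Hfun q A B C z) :=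
    fun z hz => by simpa only [neg_mul] using (hF z (hne z hz)).neg
  have h0 := congr_fun (eq_of_forall_norm_eq_one_hasSum_mul_zpow hnegated hreflected) 0
  simp only [neg_zero, zpow_zero, mul_one] at h0
  exact CharZero.neg_eq_self_iff.mp h0

/-- `H` satisfies the anti-symmetry `H(A,B,C,z) = -H(A,B,C, -1/(ABCz))`, and
consequently the constant term (the coefficient of `z⁰` in any Laurent
expansion of `H` valid on `ℂ \ {0}`) vanishes. -/
theorem Hfun_antisymm_and_constant_term (q A B C : ℂ)
    (hq0 : q ≠ 0) (hq : ‖q‖ < 1) (hABC : A * B * C ≠ 0) :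
    (∀ z : ℂ, z ≠ 0 → Hfun q A B C z = -Hfun q A B C (-1 / (A * B * C * z))) ∧
    (∀ F : ℤ → ℂ, (∀ z : ℂ, z ≠ 0 →
        HasSum (fun t : ℤ => F t * z ^ t) (Hfun q A B C z)) → F 0 = 0) :=
  Hfun_antisymm_and_constant_term_general q A B C hABC
end
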